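/- arXiv:2507.20062 — 5 statements merged into one kernel-verified Lean document; each statement's English description precedes it below -/
import Mathlib

section
/- Let ∑_{n=0}^∞ a_n be a series of real numbers with a_0 ≤ 0, such that a_n > 0 for infinitely many n and a_n ≤ 0 for infinitely many n. Suppose σ_1 and σ_2 are type R λ-permutations of the series, with bounded block numbers C_1 and C_2 respectively, such that ∑_{n=0}^∞ a_{σ_1(n)} = r_1, ∑_{n=0}^∞ a_{σ_2(n)} = r_2, and r_1 > r_2. Let C = max(C_1, C_2). Then there exists k_0 ∈ ℕ such that for all i > k_0, S_{[P_{i−C+1}, P_{i+C−1}]} > (r_1 − r_2)/2; in particular the series satisfies ST_P. -/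
open Filter Finset

noncomputable section
open scoped Classical

/-- Partial sum of the series `∑ a n`: sum of the first `n` terms. -/
def partialSum (a : ℕ → ℝ) (n : ℕ) : ℝ := ∑ i ∈ Finset.range n, a i

/-- The series `∑ a n` converges to `L`. -/
def ConvergesTo (a : ℕ → ℝ) (L : ℝ) : Prop :=
  Filter.Tendsto (partialSum a) Filter.atTop (nhds L)

/-- The series `∑ a n` converges. -/
def Converges (a : ℕ → ℝ) : Prop := ∃ L : ℝ, ConvergesTo a L

/-- The series `∑ a n` is conditionally divergent: it diverges, but some
rearrangement of it converges. -/
def CondDivergent (a : ℕ → ℝ) : Prop :=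
  ¬ Converges a ∧ ∃ σ : Equiv.Perm ℕ, Converges (fun n => a (σ n))

/-- `σ` is a type R permutation of the series `∑ a n`: it preserves the relative
order of terms of the same sign. -/
def IsTypeR (a : ℕ → ℝ) (σ : Equiv.Perm ℕ) : Prop :=
  ∀ i j : ℕ, σ i < σ j →
    ((0 < a (σ i) ∧ 0 < a (σ j)) ∨ (a (σ i) ≤ 0 ∧ a (σ j) ≤ 0)) → i < j

/-- The number of maximal integer intervals whose union is the finite set `s`
(= the number of `x ∈ s` with `x + 1 ∉ s`). -/
def blockCount (s : Finset ℕ) : ℕ := (s.filter (fun x => x + 1 ∉ s)).card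

/-- `σ` has bounded block number `C`: at every stage `n`, the set
`σ '' {0, 1, …, n}` is a union of at most `C` maximal integer intervals. -/
def HasBBN (σ : Equiv.Perm ℕ) (C : ℕ) : Prop :=
  ∀ n : ℕ, blockCount ((Finset.range (n + 1)).image σ) ≤ C

/-- `σ` is a type R λ-permutation of the series `∑ a n`: a type R permutation
with bounded block number whose rearranged series converges. -/
def IsTypeRLambda (a : ℕ → ℝ) (σ : Equiv.Perm ℕ) : Prop :=
  IsTypeR a σ ∧ (∃ C : ℕ, HasBBN σ C) ∧ Converges (fun n => a (σ n))

/-- The set of sums attainable by type R λ-permutations of `∑ a n`. -/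
def ZR (a : ℕ → ℝ) : Set ℝ :=
  {r : ℝ | ∃ σ : Equiv.Perm ℕ, IsTypeRLambda a σ ∧ ConvergesTo (fun n => a (σ n)) r}

/-- The first element `p_i` of the `i`-th positive block `P_i` (blocks 1-indexed):
the `i`-th index `n` with `a n > 0` which starts a maximal interval of positive terms. -/
def posStartIdx (a : ℕ → ℝ) (i : ℕ) : ℕ :=
  Nat.nth (fun n => 0 < a n ∧ (n = 0 ∨ a (n - 1) ≤ 0)) (i - 1)

/-- The last element `q_i` of the `i`-th positive block `P_i` (blocks 1-indexed). -/
def posEndIdx (a : ℕ → ℝ) (i : ℕ) : ℕ :=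
  Nat.nth (fun n => 0 < a n ∧ a (n + 1) ≤ 0) (i - 1)

/-- The first element `n_i` of the `i`-th negative block `N_i` (blocks 1-indexed). -/
def negStartIdx (a : ℕ → ℝ) (i : ℕ) : ℕ :=
  Nat.nth (fun n => a n ≤ 0 ∧ (n = 0 ∨ 0 < a (n - 1))) (i - 1)

/-- The last element `m_i` of the `i`-th negative block `N_i` (blocks 1-indexed). -/
def negEndIdx (a : ℕ → ℝ) (i : ℕ) : ℕ :=
  Nat.nth (fun n => a n ≤ 0 ∧ 0 < a (n + 1)) (i - 1)

/-- `S_{[P_i, P_j]}`: the sum of the terms of `∑ a n` lying in the positive blocks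
`P_i ∪ ⋯ ∪ P_j` (interpreted as `0` when `j < i`). -/
def SP (a : ℕ → ℝ) (i j : ℕ) : ℝ :=
  if j < i then 0
  else ∑ n ∈ Finset.Icc (posStartIdx a i) (posEndIdx a j), if 0 < a n then a n else 0

/-- `S_{[N_i, N_j]}`: the sum of the terms of `∑ a n` lying in the negative blocks
`N_i ∪ ⋯ ∪ N_j` (interpreted as `0` when `j < i`). -/
def SN (a : ℕ → ℝ) (i j : ℕ) : ℝ :=
  if j < i then 0
  else ∑ n ∈ Finset.Icc (negStartIdx a i) (negEndIdx a j), if a n ≤ 0 then a n else 0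

/-- The substantial property on positive blocks. -/
def STP (a : ℕ → ℝ) : Prop :=
  ∃ k : ℕ, ∃ ε : ℝ, 0 < ε ∧ ∃ i0 : ℕ, ∀ i > i0, SP a i (i + k) ≥ ε

/-- The substantial property on negative blocks. -/
def STN (a : ℕ → ℝ) : Prop :=
  ∃ k : ℕ, ∃ ε : ℝ, 0 < ε ∧ ∃ i0 : ℕ, ∀ i > i0, SN a i (i + k) ≤ -ε


namespace St4

/-! ### Sign-block predicates -/

/-- predicate for starts of positive blocks -/
def pPS (a : ℕ → ℝ) : ℕ → Prop := fun n => 0 < a n ∧ (n = 0 ∨ a (n - 1) ≤ 0)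
/-- predicate for ends of positive blocks -/
def pPE (a : ℕ → ℝ) : ℕ → Prop := fun n => 0 < a n ∧ a (n + 1) ≤ 0
/-- predicate for ends of negative blocks -/
def pNE (a : ℕ → ℝ) : ℕ → Prop := fun n => a n ≤ 0 ∧ 0 < a (n + 1)

/-- 0-indexed start of positive block -/
def Sth (a : ℕ → ℝ) (j : ℕ) : ℕ := Nat.nth (pPS a) j
/-- 0-indexed end of positive block -/
def Eth (a : ℕ → ℝ) (j : ℕ) : ℕ := Nat.nth (pPE a) j
/-- 0-indexed end of negative block -/
def Mth (a : ℕ → ℝ) (j : ℕ) : ℕ := Nat.nth (pNE a) j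

variable {a : ℕ → ℝ}

lemma exists_PS_between {u v : ℕ} (hu : a u ≤ 0) (hv : 0 < a v) (huv : u < v) :
    ∃ x, u < x ∧ x ≤ v ∧ pPS a x := by
  have hex : ∃ x, u < x ∧ 0 < a x := ⟨v, huv, hv⟩
  have hx := Nat.find_spec hex
  have hxv : Nat.find hex ≤ v := Nat.find_min' hex ⟨huv, hv⟩
  refine ⟨Nat.find hex, hx.1, hxv, hx.2, Or.inr ?_⟩
  by_cases h : u < Nat.find hex - 1
  · have hmin := Nat.find_min hex (m := Nat.find hex - 1) (by omega)
    push_neg at hmin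
    exact hmin h
  · have heq : Nat.find hex - 1 = u := by omega
    rw [heq]; exact hu

lemma exists_PE_between {u v : ℕ} (hu : 0 < a u) (hv : a v ≤ 0) (huv : u < v) :
    ∃ p, u ≤ p ∧ p < v ∧ pPE a p := by
  have hex : ∃ x, u < x ∧ a x ≤ 0 := ⟨v, huv, hv⟩
  have hx := Nat.find_spec hex
  have hxv : Nat.find hex ≤ v := Nat.find_min' hex ⟨huv, hv⟩
  have hx1 : u + 1 ≤ Nat.find hex := hx.1
  refine ⟨Nat.find hex - 1, by omega, by omega, ?_, ?_⟩
  · by_cases h : u < Nat.find hex - 1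
    · have hmin := Nat.find_min hex (m := Nat.find hex - 1) (by omega)
      push_neg at hmin
      exact hmin h
    · have heq : Nat.find hex - 1 = u := by omega
      rw [heq]; exact hu
  · have heq : Nat.find hex - 1 + 1 = Nat.find hex := by omega
    rw [heq]; exact hx.2

lemma NE_two {m m' : ℕ} (hm : pNE a m) (hm' : pNE a m') (hlt : m < m') :
    ∃ p, m < p ∧ p < m' ∧ pPE a p := by
  have h1 : m + 1 < m' := by
    rcases Nat.lt_or_ge (m + 1) m' with h | h
    · exact h
    · have heq : m + 1 = m' := by omega
      exact absurd (heq ▸ hm.2) (not_lt.2 hm'.1)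
  obtain ⟨p, hp1, hp2, hp3⟩ := exists_PE_between hm.2 hm'.1 h1
  exact ⟨p, by omega, hp2, hp3⟩

lemma nth_zero_le {p : ℕ → Prop} {x : ℕ} (hx : p x) : Nat.nth p 0 ≤ x := by
  rw [Nat.nth_zero]; exact Nat.sInf_le hx

variable (h0 : a 0 ≤ 0) (hP : {n : ℕ | 0 < a n}.Infinite) (hN : {n : ℕ | a n ≤ 0}.Infinite)

include h0 in
lemma PS_pred {x : ℕ} (hx : pPS a x) : 1 ≤ x ∧ pNE a (x - 1) := by
  have hx1 : 1 ≤ x := by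
    rcases Nat.eq_zero_or_pos x with h | h
    · exact absurd (h ▸ hx.1) (not_lt.2 h0)
    · exact h
  have hx2 : a (x - 1) ≤ 0 := by
    rcases hx.2 with h | h
    · omega
    · exact h
  have heq : x - 1 + 1 = x := by omega
  exact ⟨hx1, hx2, heq ▸ hx.1⟩

include hP hN in
lemma inf_pPE : (setOf (pPE a)).Infinite := by
  apply Set.infinite_of_forall_exists_gt
  intro B
  obtain ⟨u, hu, hBu⟩ := hP.exists_gt B
  obtain ⟨v, hv, huv⟩ := hN.exists_gt u
  obtain ⟨p, hp1, _, hp3⟩ := exists_PE_between hu hv huv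
  exact ⟨p, hp3, by omega⟩

include hP hN in
lemma inf_pPS : (setOf (pPS a)).Infinite := by
  apply Set.infinite_of_forall_exists_gt
  intro B
  obtain ⟨u, hu, hBu⟩ := hN.exists_gt B
  obtain ⟨v, hv, huv⟩ := hP.exists_gt u
  obtain ⟨x, hx1, _, hx3⟩ := exists_PS_between hu hv huv
  exact ⟨x, hx3, by omega⟩

include hP hN in
lemma inf_pNE : (setOf (pNE a)).Infinite := by
  apply Set.infinite_of_forall_exists_gt
  intro B
  obtain ⟨u, hu, hBu⟩ := hN.exists_gt B
  obtain ⟨v, hv, huv⟩ := hP.exists_gt u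
  obtain ⟨x, hx1, _, hx3⟩ := exists_PS_between hu hv huv
  have hx0 : 1 ≤ x := by omega
  refine ⟨x - 1, ?_, by omega⟩
  have h1 : a (x - 1) ≤ 0 := by
    rcases hx3.2 with h | h
    · omega
    · exact h
  have h2 : x - 1 + 1 = x := by omega
  exact ⟨h1, h2 ▸ hx3.1⟩

/-- the next element of `p` after `nth p j` -/
lemma nth_next {p : ℕ → Prop} (hp : (setOf p).Infinite) {j x : ℕ}
    (hx : p x) (h : Nat.nth p j < x) : Nat.nth p (j + 1) ≤ x := by
  have h1 : Nat.nth p (Nat.count p x) = x := Nat.nth_count hx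
  have h2 : j < Nat.count p x := by
    have h3 := (Nat.nth_strictMono hp).lt_iff_lt (a := j) (b := Nat.count p x)
    rw [h1] at h3
    exact h3.1 h
  calc Nat.nth p (j + 1) ≤ Nat.nth p (Nat.count p x) :=
        (Nat.nth_strictMono hp).monotone h2
    _ = x := h1

lemma nth_le_of_lt_nth {p : ℕ → Prop} (hp : (setOf p).Infinite) {j x : ℕ}
    (hx : p x) (h : x < Nat.nth p (j + 1)) : x ≤ Nat.nth p j := by
  have h1 : Nat.nth p (Nat.count p x) = x := Nat.nth_count hx
  have h2 : Nat.count p x < j + 1 := by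
    have h3 := (Nat.nth_strictMono hp).lt_iff_lt (a := Nat.count p x) (b := j + 1)
    rw [h1] at h3
    exact h3.1 h
  calc x = Nat.nth p (Nat.count p x) := h1.symm
    _ ≤ Nat.nth p j := (Nat.nth_strictMono hp).monotone (by omega)

include h0 hP hN in
/-- interleaving chain: `M j < S j ≤ E j < M (j+1)` -/
lemma chain : ∀ j : ℕ, Mth a j < Sth a j ∧ Sth a j ≤ Eth a j ∧ Eth a j < Mth a (j + 1) := by
  have hPS := inf_pPS hP hN
  have hPE := inf_pPE hP hN
  have hNE := inf_pNE hP hN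
  intro j
  induction j with
  | zero =>
    refine ⟨?_, ?_, ?_⟩
    · have hs : pPS a (Sth a 0) := Nat.nth_mem_of_infinite hPS 0
      obtain ⟨hs1, hsNE⟩ := PS_pred h0 hs
      have hle : Mth a 0 ≤ Sth a 0 - 1 := nth_zero_le hsNE
      omega
    · have he : pPE a (Eth a 0) := Nat.nth_mem_of_infinite hPE 0
      have he0 : 0 < Eth a 0 := by
        rcases Nat.eq_zero_or_pos (Eth a 0) with h | h
        · exact absurd (h ▸ he.1) (not_lt.2 h0)
        · exact h
      obtain ⟨x, _, hx2, hx3⟩ := exists_PS_between h0 he.1 he0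
      have hle : Sth a 0 ≤ x := nth_zero_le hx3
      omega
    · by_contra hcon
      push_neg at hcon
      have hcon' : Mth a 1 ≤ Eth a 0 := hcon
      have hM01 : Mth a 0 < Mth a 1 := Nat.nth_strictMono hNE (by omega)
      have hm0 : pNE a (Mth a 0) := Nat.nth_mem_of_infinite hNE 0
      have hm1 : pNE a (Mth a 1) := Nat.nth_mem_of_infinite hNE 1
      obtain ⟨p, hp1, hp2, hp3⟩ := NE_two hm0 hm1 hM01
      have hle : Eth a 0 ≤ p := nth_zero_le hp3
      omega
  | succ j ih =>
    obtain ⟨ih1, ih2, ih3⟩ := ih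
    have key1 : Mth a (j + 1) < Sth a (j + 1) := by
      have hs : pPS a (Sth a (j + 1)) := Nat.nth_mem_of_infinite hPS (j + 1)
      obtain ⟨hs1, hsNE⟩ := PS_pred h0 hs
      have hSS : Sth a j < Sth a (j + 1) := Nat.nth_strictMono hPS (by omega)
      have hlt : Mth a j < Sth a (j + 1) - 1 := by omega
      have hle : Mth a (j + 1) ≤ Sth a (j + 1) - 1 := nth_next hNE hsNE hlt
      omega
    refine ⟨key1, ?_, ?_⟩
    · have he : pPE a (Eth a j) := Nat.nth_mem_of_infinite hPE j
      have he' : pPE a (Eth a (j + 1)) := Nat.nth_mem_of_infinite hPE (j + 1)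
      have hEE : Eth a j < Eth a (j + 1) := Nat.nth_strictMono hPE (by omega)
      have h1 : Eth a j + 1 < Eth a (j + 1) := by
        rcases Nat.lt_or_ge (Eth a j + 1) (Eth a (j + 1)) with h | h
        · exact h
        · have heq : Eth a j + 1 = Eth a (j + 1) := by omega
          exact absurd (heq ▸ he.2) (not_le.2 he'.1)
      obtain ⟨x, hx1, hx2, hx3⟩ := exists_PS_between he.2 he'.1 h1
      have hlt : Sth a j < x := by omega
      have hle : Sth a (j + 1) ≤ x := nth_next hPS hx3 hlt
      omega
    · by_contra hcon
      push_neg at hcon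
      have hcon' : Mth a (j + 2) ≤ Eth a (j + 1) := hcon
      have hMM : Mth a (j + 1) < Mth a (j + 2) := Nat.nth_strictMono hNE (by omega)
      have hm0 : pNE a (Mth a (j + 1)) := Nat.nth_mem_of_infinite hNE (j + 1)
      have hm1 : pNE a (Mth a (j + 2)) := Nat.nth_mem_of_infinite hNE (j + 2)
      obtain ⟨p, hp1, hp2, hp3⟩ := NE_two hm0 hm1 hMM
      have hlt : Eth a j < p := by omega
      have hle : Eth a (j + 1) ≤ p := nth_next hPE hp3 hlt
      omega

include h0 hP hN in
/-- a positive term before the start of block `j+1` lies at or before the end of block `j` -/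
lemma pos_le_E {m j : ℕ} (hm : 0 < a m) (hlt : m < Sth a (j + 1)) : m ≤ Eth a j := by
  have hPS := inf_pPS hP hN
  have hPE := inf_pPE hP hN
  have hs : pPS a (Sth a (j + 1)) := Nat.nth_mem_of_infinite hPS (j + 1)
  obtain ⟨hs1, hsNE⟩ := PS_pred h0 hs
  have hms : m < Sth a (j + 1) - 1 := by
    rcases Nat.lt_or_ge m (Sth a (j + 1) - 1) with h | h
    · exact h
    · have heq : m = Sth a (j + 1) - 1 := by omega
      exact absurd (heq ▸ hm) (not_lt.2 hsNE.1)
  obtain ⟨p, hp1, hp2, hp3⟩ := exists_PE_between hm hsNE.1 hms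
  have hchain := chain h0 hP hN (j + 1)
  have hpE : p < Eth a (j + 1) := by omega
  have hle : p ≤ Eth a j := nth_le_of_lt_nth hPE hp3 hpE
  omega

/-! ### Positive and negative partial sums -/

/-- positive part -/
def posp (a : ℕ → ℝ) (m : ℕ) : ℝ := if 0 < a m then a m else 0
/-- negative part -/
def negp (a : ℕ → ℝ) (m : ℕ) : ℝ := if 0 < a m then 0 else a m

lemma posp_nonneg (m : ℕ) : 0 ≤ posp a m := by
  unfold posp; split <;> [linarith; rfl]

/-- sum of positive parts up to `t` -/
def PosS (a : ℕ → ℝ) (t : ℕ) : ℝ := ∑ m ∈ Finset.range (t + 1), posp a m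
/-- sum of negative parts up to `t` -/
def NegS (a : ℕ → ℝ) (t : ℕ) : ℝ := ∑ m ∈ Finset.range (t + 1), negp a m

lemma PosS_mono {t t' : ℕ} (h : t ≤ t') : PosS a t ≤ PosS a t' :=
  Finset.sum_le_sum_of_subset_of_nonneg (Finset.range_subset_range.2 (by omega))
    (fun m _ _ => posp_nonneg m)


include h0 hP hN in
/-- Main stage analysis for a type R permutation with bounded block number. -/
lemma stage (σ : Equiv.Perm ℕ) (C : ℕ) (hR : IsTypeR a σ) (hB : HasBBN σ C)
    (hC : 1 ≤ C) (j : ℕ) (hj : C ≤ j) :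
    ∃ n : ℕ, j ≤ n ∧
      PosS a (Eth a (j - C)) + NegS a (Mth a j) ≤ partialSum (fun k => a (σ k)) (n + 1) ∧
      partialSum (fun k => a (σ k)) (n + 1) ≤ PosS a (Eth a (j + C - 1)) + NegS a (Mth a j) := by
  have hPS := inf_pPS hP hN
  have hPE := inf_pPE hP hN
  have hNE := inf_pNE hP hN
  have hchain := chain h0 hP hN
  have hMinj : Function.Injective (Mth a) := (Nat.nth_strictMono hNE).injective
  have hEinj : Function.Injective (Eth a) := (Nat.nth_strictMono hPE).injective
  obtain ⟨n, hup, hσn⟩ :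
      ∃ n : ℕ, (∀ m, ¬ 0 < a m → m ≤ Mth a j → σ.symm m ≤ n)
        ∧ (¬ 0 < a (σ n) ∧ σ n ≤ Mth a j) := by
    have hBne : (((Finset.range (Mth a j + 1)).filter (fun m => ¬ 0 < a m)).image
        (fun m => σ.symm m)).Nonempty :=
      ⟨σ.symm 0, Finset.mem_image.2 ⟨0, Finset.mem_filter.2
        ⟨Finset.mem_range.2 (by omega), not_lt.2 h0⟩, rfl⟩⟩
    refine ⟨(((Finset.range (Mth a j + 1)).filter (fun m => ¬ 0 < a m)).image
        (fun m => σ.symm m)).max' hBne, ?_, ?_⟩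
    · intro m hm hmMi
      exact Finset.le_max' _ _ (Finset.mem_image.2 ⟨m, Finset.mem_filter.2
        ⟨Finset.mem_range.2 (by omega), hm⟩, rfl⟩)
    · have hmem : (((Finset.range (Mth a j + 1)).filter (fun m => ¬ 0 < a m)).image
          (fun m => σ.symm m)).max' hBne
          ∈ ((Finset.range (Mth a j + 1)).filter (fun m => ¬ 0 < a m)).image
          (fun m => σ.symm m) := Finset.max'_mem _ hBne
      obtain ⟨m₀, hm₀, hm₀n⟩ := Finset.mem_image.1 hmem
      obtain ⟨hm₀r, hm₀p⟩ := Finset.mem_filter.1 hm₀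
      rw [← hm₀n]
      simp only [Equiv.apply_symm_apply]
      exact ⟨hm₀p, by have := Finset.mem_range.1 hm₀r; omega⟩
  set A := (Finset.range (n + 1)).image (⇑σ) with hA
  have hBC : blockCount A ≤ C := hB n
  have gapcard : ∀ G : Finset ℕ, G ⊆ A.filter (fun x => x + 1 ∉ A) → G.card ≤ C := by
    intro G hG
    calc G.card ≤ (A.filter (fun x => x + 1 ∉ A)).card := Finset.card_le_card hG
      _ = blockCount A := rfl
      _ ≤ C := hBC
  have hmemA : ∀ m : ℕ, m ∈ A ↔ σ.symm m ≤ n := by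
    intro m
    rw [hA]
    simp only [Finset.mem_image, Finset.mem_range]
    constructor
    · rintro ⟨k, hk, rfl⟩
      simp only [Equiv.symm_apply_apply]
      omega
    · intro h
      exact ⟨σ.symm m, by omega, by simp⟩
  have G1a : ∀ m : ℕ, ¬ 0 < a m → m ≤ Mth a j → m ∈ A := by
    intro m hm hmMi
    rw [hmemA]
    exact hup m hm hmMi
  have G1b : ∀ m ∈ A, ¬ 0 < a m → m ≤ Mth a j := by
    intro m hm hmp
    by_contra hcon
    push_neg at hcon
    obtain ⟨k, hk, hkm⟩ := Finset.mem_image.1 (hA ▸ hm)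
    have hk' : k ≤ n := by have := Finset.mem_range.1 hk; omega
    have hlt : σ n < σ k := by rw [hkm]; omega
    have := hR n k hlt (Or.inr ⟨not_lt.1 hσn.1, by rw [hkm]; exact not_lt.1 hmp⟩)
    omega
  have G2 : ∀ x ∈ A, 0 < a x → ∀ m, 0 < a m → m ≤ x → m ∈ A := by
    intro x hx hxp m hmp hmx
    rcases eq_or_lt_of_le hmx with h | h
    · rwa [h]
    · obtain ⟨k, hk, hkx⟩ := Finset.mem_image.1 (hA ▸ hx)
      have hk' : k ≤ n := by have := Finset.mem_range.1 hk; omega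
      have hlt : σ (σ.symm m) < σ k := by rw [hkx]; simpa using h
      have := hR (σ.symm m) k hlt (Or.inl ⟨by simpa using hmp, by rw [hkx]; exact hxp⟩)
      rw [hmemA]
      omega
  have hMlmem : ∀ l : ℕ, l ≤ j → Mth a l ∈ A := by
    intro l hl
    have hMl : pNE a (Mth a l) := Nat.nth_mem_of_infinite hNE l
    exact G1a _ (not_lt.2 hMl.1) ((Nat.nth_strictMono hNE).monotone hl)
  have hAposne : (A.filter (fun m => 0 < a m)).Nonempty := by
    by_contra hcon
    rw [Finset.not_nonempty_iff_eq_empty] at hcon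
    have hnopos : ∀ m ∈ A, ¬ 0 < a m := by
      intro m hm hp
      have hmem : m ∈ A.filter (fun m => 0 < a m) := Finset.mem_filter.2 ⟨hm, hp⟩
      rw [hcon] at hmem
      exact absurd hmem (Finset.notMem_empty m)
    have hsub : (Finset.range (j + 1)).image (Mth a) ⊆ A.filter (fun x => x + 1 ∉ A) := by
      intro x hx
      obtain ⟨l, hl, hlx⟩ := Finset.mem_image.1 hx
      have hl' : l ≤ j := by have := Finset.mem_range.1 hl; omega
      have hMl : pNE a (Mth a l) := Nat.nth_mem_of_infinite hNE l
      refine Finset.mem_filter.2 ⟨hlx ▸ hMlmem l hl', ?_⟩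
      rw [← hlx]
      intro hmem1
      exact hnopos _ hmem1 hMl.2
    have hcard : ((Finset.range (j + 1)).image (Mth a)).card = j + 1 := by
      rw [Finset.card_image_of_injective _ hMinj, Finset.card_range]
    have := gapcard _ hsub
    omega
  set π := (A.filter (fun m => 0 < a m)).max' hAposne with hπ
  have hπmem : π ∈ A.filter (fun m => 0 < a m) := Finset.max'_mem _ hAposne
  have hπA : π ∈ A := (Finset.mem_filter.1 hπmem).1
  have hπpos : 0 < a π := (Finset.mem_filter.1 hπmem).2
  have hπmax : ∀ m ∈ A, 0 < a m → m ≤ π := fun m hm hp =>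
    Finset.le_max' _ m (Finset.mem_filter.2 ⟨hm, hp⟩)
  have hT : partialSum (fun k => a (σ k)) (n + 1) = PosS a π + NegS a (Mth a j) := by
    have h1 : partialSum (fun k => a (σ k)) (n + 1) = ∑ m ∈ A, a m := by
      rw [hA, Finset.sum_image (fun x _ y _ h => σ.injective h)]
      rfl
    rw [h1, ← Finset.sum_filter_add_sum_filter_not A (fun m => 0 < a m)]
    congr 1
    · have heq : A.filter (fun m => 0 < a m)
          = (Finset.range (π + 1)).filter (fun m => 0 < a m) := by
        ext m
        simp only [Finset.mem_filter, Finset.mem_range]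
        constructor
        · rintro ⟨hm, hp⟩
          exact ⟨by have := hπmax m hm hp; omega, hp⟩
        · rintro ⟨hm, hp⟩
          exact ⟨G2 π hπA hπpos m hp (by omega), hp⟩
      rw [heq, Finset.sum_filter]
      rfl
    · have heq : A.filter (fun m => ¬ 0 < a m)
          = (Finset.range (Mth a j + 1)).filter (fun m => ¬ 0 < a m) := by
        ext m
        simp only [Finset.mem_filter, Finset.mem_range]
        constructor
        · rintro ⟨hm, hp⟩
          exact ⟨by have := G1b m hm hp; omega, hp⟩
        · rintro ⟨hm, hp⟩
          exact ⟨G1a m hp (by omega), hp⟩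
      rw [heq, Finset.sum_filter]
      unfold NegS negp
      apply Finset.sum_congr rfl
      intro m _
      by_cases h : 0 < a m <;> simp [h]
  have hub : π ≤ Eth a (j + C - 1) := by
    have h1 : π < Sth a (j + C) := by
      by_contra hcon
      push_neg at hcon
      have hAne : A.Nonempty := ⟨π, hπA⟩
      have hch1 := hchain (j + C - 1)
      have hjc : j + C - 1 + 1 = j + C := by omega
      rw [hjc] at hch1
      have hch2 := hchain (j + C)
      have hcj := hchain j
      have hsub : insert (A.max' hAne) ((Finset.Icc j (j + C - 1)).image (Eth a))
          ⊆ A.filter (fun x => x + 1 ∉ A) := by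
        intro x hx
        rcases Finset.mem_insert.1 hx with h | h
        · subst h
          refine Finset.mem_filter.2 ⟨Finset.max'_mem _ hAne, ?_⟩
          intro hmem
          have := Finset.le_max' _ _ hmem
          omega
        · obtain ⟨l, hl, hlx⟩ := Finset.mem_image.1 h
          obtain ⟨hl1, hl2⟩ := Finset.mem_Icc.1 hl
          have hel : pPE a (Eth a l) := Nat.nth_mem_of_infinite hPE l
          have hle1 : Eth a l ≤ Eth a (j + C - 1) := (Nat.nth_strictMono hPE).monotone hl2
          have hge : Eth a j ≤ Eth a l := (Nat.nth_strictMono hPE).monotone hl1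
          have hmem : Eth a l ∈ A := G2 π hπA hπpos _ hel.1 (by omega)
          refine Finset.mem_filter.2 ⟨hlx ▸ hmem, ?_⟩
          rw [← hlx]
          intro hmem1
          have := G1b _ hmem1 (not_lt.2 hel.2)
          omega
      have hnotmem : A.max' hAne ∉ (Finset.Icc j (j + C - 1)).image (Eth a) := by
        intro hmem
        obtain ⟨l, hl, hlx⟩ := Finset.mem_image.1 hmem
        obtain ⟨hl1, hl2⟩ := Finset.mem_Icc.1 hl
        have hle1 : Eth a l ≤ Eth a (j + C - 1) := (Nat.nth_strictMono hPE).monotone hl2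
        have hmax : π ≤ A.max' hAne := Finset.le_max' _ _ hπA
        omega
      have hcard : (insert (A.max' hAne) ((Finset.Icc j (j + C - 1)).image (Eth a))).card
          = C + 1 := by
        rw [Finset.card_insert_of_notMem hnotmem,
          Finset.card_image_of_injective _ hEinj, Nat.card_Icc]
        omega
      have := gapcard _ hsub
      omega
    have hjc : j + C - 1 + 1 = j + C := by omega
    have h2 : π < Sth a (j + C - 1 + 1) := by rw [hjc]; exact h1
    exact pos_le_E h0 hP hN hπpos h2
  have hlb : Eth a (j - C) ≤ π := by
    by_contra hcon
    push_neg at hcon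
    by_cases hc1 : 0 < a (π + 1)
    · have hchjc := hchain (j - C)
      have hsub : insert π ((Finset.Icc (j - C + 1) j).image (Mth a))
          ⊆ A.filter (fun x => x + 1 ∉ A) := by
        intro x hx
        rcases Finset.mem_insert.1 hx with h | h
        · subst h
          refine Finset.mem_filter.2 ⟨hπA, ?_⟩
          intro hmem
          have := hπmax _ hmem hc1
          omega
        · obtain ⟨l, hl, hlx⟩ := Finset.mem_image.1 h
          obtain ⟨hl1, hl2⟩ := Finset.mem_Icc.1 hl
          have hMl : pNE a (Mth a l) := Nat.nth_mem_of_infinite hNE l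
          have hge : Mth a (j - C + 1) ≤ Mth a l := (Nat.nth_strictMono hNE).monotone hl1
          refine Finset.mem_filter.2 ⟨hlx ▸ hMlmem l hl2, ?_⟩
          rw [← hlx]
          intro hmem1
          have := hπmax _ hmem1 hMl.2
          omega
      have hnotmem : π ∉ (Finset.Icc (j - C + 1) j).image (Mth a) := by
        intro hmem
        obtain ⟨l, hl, hlx⟩ := Finset.mem_image.1 hmem
        obtain ⟨hl1, hl2⟩ := Finset.mem_Icc.1 hl
        have hge : Mth a (j - C + 1) ≤ Mth a l := (Nat.nth_strictMono hNE).monotone hl1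
        omega
      have hcard : (insert π ((Finset.Icc (j - C + 1) j).image (Mth a))).card = C + 1 := by
        rw [Finset.card_insert_of_notMem hnotmem,
          Finset.card_image_of_injective _ hMinj, Nat.card_Icc]
        omega
      have := gapcard _ hsub
      omega
    · have hπPE : pPE a π := ⟨hπpos, not_lt.1 hc1⟩
      have hEk0 : Eth a (Nat.count (pPE a) π) = π := Nat.nth_count hπPE
      have hk0lt : Nat.count (pPE a) π < j - C := by
        have h3 : Eth a (Nat.count (pPE a) π) < Eth a (j - C) ↔ Nat.count (pPE a) π < j - C :=
          (Nat.nth_strictMono hPE).lt_iff_lt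
        rw [hEk0] at h3
        exact h3.1 hcon
      have hchk0 := hchain (Nat.count (pPE a) π)
      have hsub : (Finset.Icc (Nat.count (pPE a) π + 1) j).image (Mth a)
          ⊆ A.filter (fun x => x + 1 ∉ A) := by
        intro x hx
        obtain ⟨l, hl, hlx⟩ := Finset.mem_image.1 hx
        obtain ⟨hl1, hl2⟩ := Finset.mem_Icc.1 hl
        have hMl : pNE a (Mth a l) := Nat.nth_mem_of_infinite hNE l
        have hge : Mth a (Nat.count (pPE a) π + 1) ≤ Mth a l :=
          (Nat.nth_strictMono hNE).monotone hl1
        refine Finset.mem_filter.2 ⟨hlx ▸ hMlmem l hl2, ?_⟩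
        rw [← hlx]
        intro hmem1
        have := hπmax _ hmem1 hMl.2
        omega
      have hcard : ((Finset.Icc (Nat.count (pPE a) π + 1) j).image (Mth a)).card
          = j - Nat.count (pPE a) π := by
        rw [Finset.card_image_of_injective _ hMinj, Nat.card_Icc]
        omega
      have := gapcard _ hsub
      omega
  have hnj : j ≤ n := by
    have hsub : (Finset.range (j + 1)).image (Mth a) ⊆ A := by
      intro x hx
      obtain ⟨l, hl, hlx⟩ := Finset.mem_image.1 hx
      have hl' : l ≤ j := by have := Finset.mem_range.1 hl; omega
      exact hlx ▸ hMlmem l hl'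
    have hc1 : ((Finset.range (j + 1)).image (Mth a)).card = j + 1 := by
      rw [Finset.card_image_of_injective _ hMinj, Finset.card_range]
    have hc2 : A.card = n + 1 := by
      rw [hA, Finset.card_image_of_injective _ σ.injective, Finset.card_range]
    have := Finset.card_le_card hsub
    omega
  refine ⟨n, hnj, ?_, ?_⟩
  · rw [hT]
    have := PosS_mono (a := a) hlb
    linarith
  · rw [hT]
    have := PosS_mono (a := a) hub
    linarith

lemma posStartIdx_eq (a : ℕ → ℝ) (i : ℕ) : posStartIdx a i = Sth a (i - 1) := rfl

lemma posEndIdx_eq (a : ℕ → ℝ) (i : ℕ) : posEndIdx a i = Eth a (i - 1) := rfl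

end St4

/-- If `σ₁, σ₂` are type R λ-permutations with bounded block
numbers `C₁, C₂` rearranging the series to `r₁ > r₂`, then with `C = max C₁ C₂`
there is `k₀` such that `S_{[P_{i−C+1},P_{i+C−1}]} > (r₁ − r₂)/2` for all
`i > k₀`; in particular the series satisfies `ST_P`. -/
theorem statement4 (a : ℕ → ℝ) (h0 : a 0 ≤ 0)
    (hP : {n : ℕ | 0 < a n}.Infinite) (hN : {n : ℕ | a n ≤ 0}.Infinite)
    (σ₁ σ₂ : Equiv.Perm ℕ) (C₁ C₂ : ℕ) (r₁ r₂ : ℝ)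
    (hR₁ : IsTypeR a σ₁) (hB₁ : HasBBN σ₁ C₁)
    (hR₂ : IsTypeR a σ₂) (hB₂ : HasBBN σ₂ C₂)
    (hr₁ : ConvergesTo (fun n => a (σ₁ n)) r₁)
    (hr₂ : ConvergesTo (fun n => a (σ₂ n)) r₂)
    (hlt : r₂ < r₁) :
    (∃ k₀ : ℕ, ∀ i > k₀,
      SP a (i - max C₁ C₂ + 1) (i + max C₁ C₂ - 1) > (r₁ - r₂) / 2) ∧ STP a := by
  set C := max C₁ C₂ with hC
  have hC1 : 1 ≤ C₁ := by
    have h := hB₁ 0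
    have h2 : (Finset.range 1).image ⇑σ₁ = {σ₁ 0} := by
      rw [Finset.range_one, Finset.image_singleton]
    rw [h2] at h
    have h3 : blockCount {σ₁ 0} = 1 := by
      unfold blockCount
      rw [Finset.filter_singleton, if_pos]
      · exact Finset.card_singleton _
      · simp
    omega
  have hCge : 1 ≤ C := le_trans hC1 (le_max_left _ _)
  have hB₁' : HasBBN σ₁ C := fun n => le_trans (hB₁ n) (le_max_left _ _)
  have hB₂' : HasBBN σ₂ C := fun n => le_trans (hB₂ n) (le_max_right _ _)
  have hst1 : ∀ j : ℕ, ∃ n : ℕ, C ≤ j → (j ≤ n ∧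
      St4.PosS a (St4.Eth a (j - C)) + St4.NegS a (St4.Mth a j)
        ≤ partialSum (fun k => a (σ₁ k)) (n + 1) ∧
      partialSum (fun k => a (σ₁ k)) (n + 1)
        ≤ St4.PosS a (St4.Eth a (j + C - 1)) + St4.NegS a (St4.Mth a j)) := by
    intro j
    by_cases h : C ≤ j
    · obtain ⟨n, hn⟩ := St4.stage h0 hP hN σ₁ C hR₁ hB₁' hCge j h
      exact ⟨n, fun _ => hn⟩
    · exact ⟨0, fun h' => absurd h' h⟩
  have hst2 : ∀ j : ℕ, ∃ n : ℕ, C ≤ j → (j ≤ n ∧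
      St4.PosS a (St4.Eth a (j - C)) + St4.NegS a (St4.Mth a j)
        ≤ partialSum (fun k => a (σ₂ k)) (n + 1) ∧
      partialSum (fun k => a (σ₂ k)) (n + 1)
        ≤ St4.PosS a (St4.Eth a (j + C - 1)) + St4.NegS a (St4.Mth a j)) := by
    intro j
    by_cases h : C ≤ j
    · obtain ⟨n, hn⟩ := St4.stage h0 hP hN σ₂ C hR₂ hB₂' hCge j h
      exact ⟨n, fun _ => hn⟩
    · exact ⟨0, fun h' => absurd h' h⟩
  choose n₁ hn₁ using hst1
  choose n₂ hn₂ using hst2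
  have htt1 : Filter.Tendsto (fun j => n₁ j + 1) Filter.atTop Filter.atTop := by
    refine tendsto_atTop_mono' Filter.atTop ?_ tendsto_id
    filter_upwards [Filter.eventually_ge_atTop C] with j hj
    have := (hn₁ j hj).1
    simp only [id_eq]
    omega
  have htt2 : Filter.Tendsto (fun j => n₂ j + 1) Filter.atTop Filter.atTop := by
    refine tendsto_atTop_mono' Filter.atTop ?_ tendsto_id
    filter_upwards [Filter.eventually_ge_atTop C] with j hj
    have := (hn₂ j hj).1
    simp only [id_eq]
    omega
  have hT1 : Filter.Tendsto (fun j => partialSum (fun k => a (σ₁ k)) (n₁ j + 1))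
      Filter.atTop (nhds r₁) := hr₁.comp htt1
  have hT2 : Filter.Tendsto (fun j => partialSum (fun k => a (σ₂ k)) (n₂ j + 1))
      Filter.atTop (nhds r₂) := hr₂.comp htt2
  have hhalf : (r₁ - r₂) / 2 < r₁ - r₂ := by linarith
  have hev : ∀ᶠ j in Filter.atTop, (r₁ - r₂) / 2 <
      partialSum (fun k => a (σ₁ k)) (n₁ j + 1) - partialSum (fun k => a (σ₂ k)) (n₂ j + 1) :=
    (hT1.sub hT2).eventually (eventually_gt_nhds hhalf)
  obtain ⟨J, hJ⟩ := Filter.eventually_atTop.1 hev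
  have main : ∀ i > max J C, SP a (i - C + 1) (i + C - 1) > (r₁ - r₂) / 2 := by
    intro i hi
    have hiJ : J ≤ i - 1 := by omega
    have hiC : C ≤ i - 1 := by omega
    obtain ⟨hn1a, hn1b, hn1c⟩ := hn₁ (i - 1) hiC
    obtain ⟨hn2a, hn2b, hn2c⟩ := hn₂ (i - 1) hiC
    have hgt := hJ (i - 1) hiJ
    have hSP : SP a (i - C + 1) (i + C - 1)
        = ∑ m ∈ Finset.Icc (St4.Sth a (i - 1 - C + 1)) (St4.Eth a (i - 1 + C - 1)),
            St4.posp a m := by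
      rw [SP, if_neg (by omega), St4.posStartIdx_eq, St4.posEndIdx_eq]
      have e1 : i - C + 1 - 1 = i - 1 - C + 1 := by omega
      have e2 : i + C - 1 - 1 = i - 1 + C - 1 := by omega
      rw [e1, e2]
      rfl
    have hkey : St4.PosS a (St4.Eth a (i - 1 + C - 1)) - St4.PosS a (St4.Eth a (i - 1 - C))
        ≤ ∑ m ∈ Finset.Icc (St4.Sth a (i - 1 - C + 1)) (St4.Eth a (i - 1 + C - 1)),
            St4.posp a m := by
      have hEE : St4.Eth a (i - 1 - C) ≤ St4.Eth a (i - 1 + C - 1) :=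
        (Nat.nth_strictMono (St4.inf_pPE hP hN)).monotone (by omega)
      have h1 : St4.PosS a (St4.Eth a (i - 1 + C - 1)) - St4.PosS a (St4.Eth a (i - 1 - C))
          = ∑ m ∈ Finset.Ico (St4.Eth a (i - 1 - C) + 1) (St4.Eth a (i - 1 + C - 1) + 1),
              St4.posp a m := by
        unfold St4.PosS
        rw [Finset.sum_Ico_eq_sub _ (by omega)]
      rw [h1, Finset.Ico_add_one_right_eq_Icc,
        ← Finset.sum_filter_ne_zero (Finset.Icc (St4.Eth a (i - 1 - C) + 1)
          (St4.Eth a (i - 1 + C - 1)))]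
      apply Finset.sum_le_sum_of_subset_of_nonneg
      · intro m hm
        obtain ⟨hm1, hm2⟩ := Finset.mem_filter.1 hm
        obtain ⟨hma, hmb⟩ := Finset.mem_Icc.1 hm1
        have hpos : 0 < a m := by
          by_contra hq
          apply hm2
          unfold St4.posp
          rw [if_neg hq]
        have hge : St4.Sth a (i - 1 - C + 1) ≤ m := by
          by_contra hq
          push_neg at hq
          have := St4.pos_le_E h0 hP hN hpos hq
          omega
        exact Finset.mem_Icc.2 ⟨hge, hmb⟩
      · intro m _ _
        exact St4.posp_nonneg m
    rw [hSP]
    calc (r₁ - r₂) / 2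
        < partialSum (fun k => a (σ₁ k)) (n₁ (i - 1) + 1)
          - partialSum (fun k => a (σ₂ k)) (n₂ (i - 1) + 1) := hgt
      _ ≤ St4.PosS a (St4.Eth a (i - 1 + C - 1)) - St4.PosS a (St4.Eth a (i - 1 - C)) := by
          linarith
      _ ≤ _ := hkey
  constructor
  · exact ⟨max J C, main⟩
  · refine ⟨2 * C - 2, (r₁ - r₂) / 2, by linarith, max J C + C, ?_⟩
    intro i' hi'
    have h1 := main (i' + C - 1) (by omega)
    have e1 : i' + C - 1 - C + 1 = i' := by omega
    have e2 : i' + C - 1 + C - 1 = i' + (2 * C - 2) := by omega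
    rw [e1, e2] at h1
    exact le_of_lt h1
end
end

section
/- Let ∑_{n=0}^∞ a_n be a series of real numbers with a_0 ≤ 0, such that a_n > 0 for infinitely many n and a_n ≤ 0 for infinitely many n. Suppose σ_1 and σ_2 are type R λ-permutations of the series, with bounded block numbers C_1 and C_2 respectively, such that ∑_{n=0}^∞ a_{σ_1(n)} = r_1, ∑_{n=0}^∞ a_{σ_2(n)} = r_2, and r_1 > r_2. Let C = max(C_1, C_2). Then there exists k_0 ∈ ℕ such that for all i > k_0, S_{[N_{i+1}, N_{i+2C−1}]} < −(r_1 − r_2)/2; in particular the series satisfies ST_N. -/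
open Filter Finset

noncomputable section
open scoped Classical

/-! Fix `b` and let `m` be the last index of the negative block `N_{b+1}`. Stop `σ₁` when it
places `m`: being of type R, it has then placed exactly the nonpositive terms up to `m`, and its
positive terms are the positive terms up to the largest one `y` among them. The block bound
forces `y` to lie before `N_{b+C₁+1}`: otherwise the last indices of `P_{b+1}, …, P_{b+C₁}`
together with `y` would be `C₁ + 1` right ends of maximal intervals of the placed set. Now stop
`σ₂` when it places `y`: it has placed the same positive terms, and, by the same counting, only
nonpositive terms from `N_1, …, N_{b+2C}`. So the second partial sum minus the first is at least
`S_{[N_{b+2}, N_{b+2C}]}`. As `b → ∞` both stopping times tend to infinity and the difference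
tends to `r₂ - r₁`, which eventually pushes that block sum below `-(r₁ - r₂)/2`. -/

-- `Nat.nth (IsNegBlockEnd a) k` and `Nat.nth (IsPosBlockEnd a) k` are the last indices
-- `m_{k+1}`, `q_{k+1}` of the blocks `N_{k+1}`, `P_{k+1}`.
def IsNegBlockEnd (a : ℕ → ℝ) (n : ℕ) : Prop := a n ≤ 0 ∧ 0 < a (n + 1)

def IsPosBlockEnd (a : ℕ → ℝ) (n : ℕ) : Prop := 0 < a n ∧ a (n + 1) ≤ 0

theorem Nat.exists_le_lt_and_not_succ {p : ℕ → Prop} {x y : ℕ} (hx : p x) (hy : ¬ p y)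
    (hxy : x ≤ y) : ∃ n, x ≤ n ∧ n < y ∧ p n ∧ ¬ p (n + 1) := by
  induction y, hxy using Nat.le_induction with
  | base => exact absurd hx hy
  | succ y hxy ih =>
    by_cases hpy : p y
    · exact ⟨y, hxy, y.lt_succ_self, hpy, hy⟩
    · obtain ⟨n, hxn, hny, hn⟩ := ih hpy
      exact ⟨n, hxn, hny.trans y.lt_succ_self, hn⟩

section BlockStructure

variable {a : ℕ → ℝ}

theorem infinite_setOf_isNegBlockEnd (hP : {n : ℕ | 0 < a n}.Infinite)
    (hN : {n : ℕ | a n ≤ 0}.Infinite) : (Set.ofPred (IsNegBlockEnd a)).Infinite := by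
  refine Set.infinite_of_forall_exists_gt fun K => ?_
  obtain ⟨x, hx : a x ≤ 0, hKx⟩ := hN.exists_gt K
  obtain ⟨y, hy : 0 < a y, hxy⟩ := hP.exists_gt x
  obtain ⟨n, hxn, -, hn, hn'⟩ :=
    Nat.exists_le_lt_and_not_succ (p := (a · ≤ 0)) hx hy.not_ge hxy.le
  exact ⟨n, ⟨hn, not_le.mp hn'⟩, hKx.trans_le hxn⟩

theorem infinite_setOf_isPosBlockEnd (hP : {n : ℕ | 0 < a n}.Infinite)
    (hN : {n : ℕ | a n ≤ 0}.Infinite) : (Set.ofPred (IsPosBlockEnd a)).Infinite := by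
  refine Set.infinite_of_forall_exists_gt fun K => ?_
  obtain ⟨x, hx : 0 < a x, hKx⟩ := hP.exists_gt K
  obtain ⟨y, hy : a y ≤ 0, hxy⟩ := hN.exists_gt x
  obtain ⟨n, hxn, -, hn, hn'⟩ :=
    Nat.exists_le_lt_and_not_succ (p := (0 < a ·)) hx hy.not_gt hxy.le
  exact ⟨n, ⟨hn, not_lt.mp hn'⟩, hKx.trans_le hxn⟩

-- Block ends alternate, starting with a negative one.
theorem count_isNegBlockEnd (h0 : a 0 ≤ 0) (x : ℕ) :
    Nat.count (IsNegBlockEnd a) x =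
      Nat.count (IsPosBlockEnd a) x + if a x ≤ 0 then 0 else 1 := by
  induction x with
  | zero => simp [h0]
  | succ x ih =>
    rw [Nat.count_succ, Nat.count_succ, ih]
    by_cases hx : a x ≤ 0 <;> by_cases hx' : a (x + 1) ≤ 0 <;>
      simp [IsNegBlockEnd, IsPosBlockEnd, hx, hx', lt_iff_not_ge]

variable (h0 : a 0 ≤ 0) (hP : {n : ℕ | 0 < a n}.Infinite) (hN : {n : ℕ | a n ≤ 0}.Infinite)
include h0 hP hN

-- No nonpositive term lies in `(m_{k+1}, q_{k+1}]`.
theorem nth_isNegBlockEnd_lt_iff {x : ℕ} (hx : a x ≤ 0) (k : ℕ) :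
    Nat.nth (IsNegBlockEnd a) k < x ↔ Nat.nth (IsPosBlockEnd a) k < x := by
  rw [← Nat.lt_nth_iff_count_lt (infinite_setOf_isNegBlockEnd hP hN),
    ← Nat.lt_nth_iff_count_lt (infinite_setOf_isPosBlockEnd hP hN),
    count_isNegBlockEnd h0, if_pos hx, add_zero]

theorem nth_isNegBlockEnd_lt_nth_isPosBlockEnd (k : ℕ) :
    Nat.nth (IsNegBlockEnd a) k < Nat.nth (IsPosBlockEnd a) k := by
  have hPE := infinite_setOf_isPosBlockEnd hP hN
  rw [← Nat.lt_nth_iff_count_lt (infinite_setOf_isNegBlockEnd hP hN), count_isNegBlockEnd h0,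
    Nat.count_nth_of_infinite hPE, if_neg (Nat.nth_mem_of_infinite hPE k).1.not_ge]
  exact k.lt_succ_self

theorem nth_isPosBlockEnd_lt_nth_isNegBlockEnd_succ (k : ℕ) :
    Nat.nth (IsPosBlockEnd a) k < Nat.nth (IsNegBlockEnd a) (k + 1) := by
  have hNE := infinite_setOf_isNegBlockEnd hP hN
  rw [← nth_isNegBlockEnd_lt_iff h0 hP hN (Nat.nth_mem_of_infinite hNE _).1]
  exact Nat.nth_strictMono hNE k.lt_succ_self

theorem negStartIdx_add_two (k : ℕ) :
    negStartIdx a (k + 2) = Nat.nth (IsPosBlockEnd a) k + 1 := by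
  have hPE := infinite_setOf_isPosBlockEnd hP hN
  have hq := Nat.nth_mem_of_infinite hPE k
  have hcount : Nat.count (fun n => a n ≤ 0 ∧ (n = 0 ∨ 0 < a (n - 1)))
      (Nat.nth (IsPosBlockEnd a) k + 1) = k + 1 := by
    rw [Nat.count_succ', if_pos ⟨h0, Or.inl rfl⟩]
    convert congrArg (· + 1) (Nat.count_nth_of_infinite hPE k) using 3 with n
    simp only [Nat.add_sub_cancel, Nat.add_one_ne_zero, false_or]
    exact funext fun n => propext and_comm
  rw [negStartIdx, show k + 2 - 1 = k + 1 from rfl, ← hcount, Nat.nth_count]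
  exact ⟨hq.2, Or.inr (by simpa using hq.1)⟩

end BlockStructure

section BlockSums

variable {a : ℕ → ℝ} (h0 : a 0 ≤ 0) (hP : {n : ℕ | 0 < a n}.Infinite)
  (hN : {n : ℕ | a n ≤ 0}.Infinite)
include h0 hP hN

theorem SN_eq_sum_range_sub_sum_range {b j : ℕ} (hbj : b < j) :
    SN a (b + 2) (j + 1) =
      ∑ n ∈ range (Nat.nth (IsNegBlockEnd a) j + 1), (if a n ≤ 0 then a n else 0) -
        ∑ n ∈ range (Nat.nth (IsNegBlockEnd a) b + 1), (if a n ≤ 0 then a n else 0) := by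
  have hNE := infinite_setOf_isNegBlockEnd hP hN
  set m := Nat.nth (IsNegBlockEnd a)
  set q := Nat.nth (IsPosBlockEnd a)
  have hmq : m b ≤ q b := (nth_isNegBlockEnd_lt_nth_isPosBlockEnd h0 hP hN b).le
  have hqm : q b ≤ m j := (nth_isPosBlockEnd_lt_nth_isNegBlockEnd_succ h0 hP hN b).le.trans
    (Nat.nth_monotone hNE hbj)
  have hgap : ∑ n ∈ Ioc (m b) (q b), (if a n ≤ 0 then a n else 0) = 0 := by
    refine Finset.sum_eq_zero fun n hn => if_neg fun hna => ?_
    rw [Finset.mem_Ioc, nth_isNegBlockEnd_lt_iff h0 hP hN hna] at hn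
    exact hn.1.not_ge hn.2
  rw [← Finset.sum_range_add_sum_Ico _ (by omega : m b + 1 ≤ m j + 1), add_sub_cancel_left,
    Finset.Ico_add_one_add_one_eq_Ioc, ← Finset.sum_Ioc_consecutive _ hmq hqm, hgap, zero_add,
    SN, if_neg (by omega), negStartIdx_add_two h0 hP hN, Finset.Icc_add_one_left_eq_Ioc]
  rfl

end BlockSums

def stage (σ : Equiv.Perm ℕ) (n : ℕ) : Finset ℕ := (range (n + 1)).image σ

section Stages

variable {a : ℕ → ℝ} {σ : Equiv.Perm ℕ}

theorem mem_stage {n z : ℕ} : z ∈ stage σ n ↔ σ.symm z ≤ n := by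
  simp [stage, ← Equiv.eq_symm_apply]

theorem partialSum_comp_add_one (a : ℕ → ℝ) (σ : Equiv.Perm ℕ) (n : ℕ) :
    partialSum (fun k => a (σ k)) (n + 1) = ∑ z ∈ stage σ n, a z := by
  rw [partialSum, stage, Finset.sum_image σ.injective.injOn]

theorem IsTypeR.symm_lt_symm (hR : IsTypeR a σ) {w z : ℕ} (hwz : w < z)
    (hsign : 0 < a w ↔ 0 < a z) : σ.symm w < σ.symm z := by
  refine hR _ _ (by simpa using hwz) ?_
  simp only [Equiv.apply_symm_apply]
  by_cases hz : 0 < a z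
  · exact Or.inl ⟨hsign.2 hz, hz⟩
  · exact Or.inr ⟨not_lt.1 (mt hsign.1 hz), not_lt.1 hz⟩

theorem IsTypeR.mem_stage_of_le (hR : IsTypeR a σ) {n w z : ℕ} (hz : z ∈ stage σ n)
    (hwz : w ≤ z) (hsign : 0 < a w ↔ 0 < a z) : w ∈ stage σ n := by
  rw [mem_stage] at hz ⊢
  rcases hwz.eq_or_lt with rfl | hwz
  · exact hz
  · exact (hR.symm_lt_symm hwz hsign).le.trans hz

theorem IsTypeR.notMem_stage_symm (hR : IsTypeR a σ) {x z : ℕ} (hxz : x < z)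
    (hsign : 0 < a x ↔ 0 < a z) : z ∉ stage σ (σ.symm x) := by
  rw [mem_stage, not_le]
  exact hR.symm_lt_symm hxz hsign

theorem IsTypeR.filter_stage_eq (hR : IsTypeR a σ) {p : ℕ → Prop} [DecidablePred p]
    (hp : ∀ w z, p w → p z → (0 < a w ↔ 0 < a z)) {n x : ℕ} (hx : x ∈ stage σ n) (hpx : p x)
    (hmax : ∀ z ∈ stage σ n, p z → z ≤ x) :
    (stage σ n).filter p = (range (x + 1)).filter p := by
  ext z
  simp only [Finset.mem_filter, Finset.mem_range, Nat.lt_succ_iff]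
  exact ⟨fun ⟨hz, hpz⟩ => ⟨hmax z hz hpz, hpz⟩,
    fun ⟨hzx, hpz⟩ => ⟨hR.mem_stage_of_le hx hzx (hp z x hpz hpx), hpz⟩⟩

theorem IsTypeR.filter_stage_symm (hR : IsTypeR a σ) {p : ℕ → Prop} [DecidablePred p]
    (hp : ∀ w z, p w → p z → (0 < a w ↔ 0 < a z)) {x : ℕ} (hpx : p x) :
    (stage σ (σ.symm x)).filter p = (range (x + 1)).filter p :=
  hR.filter_stage_eq hp (mem_stage.2 le_rfl) hpx fun z hz hpz =>
    not_lt.1 fun hxz => hR.notMem_stage_symm hxz (hp x z hpx hpz) hz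

end Stages

theorem lt_blockCount_of_injective {f : ℕ → ℕ} (hf : Function.Injective f) {s : Finset ℕ}
    {z lo c : ℕ} (hz : z ∈ s) (hfs : ∀ t ∈ Ico lo (lo + c), f t ∈ s ∧ f t + 1 ∉ s ∧ f t < z) :
    c < blockCount s := by
  have hmax : s.max' ⟨z, hz⟩ ∉ (Ico lo (lo + c)).image f := by
    simp only [Finset.mem_image, not_exists, not_and]
    exact fun t ht hft => (hfs t ht).2.2.not_ge (hft ▸ s.le_max' z hz)
  have hW : insert (s.max' ⟨z, hz⟩) ((Ico lo (lo + c)).image f) ⊆ s.filter (· + 1 ∉ s) := by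
    intro w hw
    simp only [Finset.mem_insert, Finset.mem_image, Finset.mem_filter] at hw ⊢
    rcases hw with rfl | ⟨t, ht, rfl⟩
    · exact ⟨s.max'_mem _, fun h => (s.le_max' _ h).not_gt (Nat.lt_succ_self _)⟩
    · exact ⟨(hfs t ht).1, (hfs t ht).2.1⟩
  have := Finset.card_le_card hW
  rwa [Finset.card_insert_of_notMem hmax, Finset.card_image_of_injective _ hf, Nat.card_Ico,
    Nat.add_sub_cancel_left, Nat.add_one_le_iff] at this

theorem HasBBN.one_le {σ : Equiv.Perm ℕ} {C : ℕ} (hB : HasBBN σ C) : 1 ≤ C := by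
  simpa [blockCount, Finset.filter_singleton] using hB 0

theorem sum_eq_sum_filter_pos_add_sum_filter_nonpos {ι : Type*} (f : ι → ℝ) (s : Finset ι) :
    ∑ i ∈ s, f i = ∑ i ∈ s with 0 < f i, f i + ∑ i ∈ s with f i ≤ 0, f i := by
  rw [← Finset.sum_filter_add_sum_filter_not s (0 < f ·)]
  simp only [not_lt]

section Bounds

variable {a : ℕ → ℝ} (h0 : a 0 ≤ 0) (hP : {n : ℕ | 0 < a n}.Infinite)
  (hN : {n : ℕ | a n ≤ 0}.Infinite) {σ : Equiv.Perm ℕ} {C : ℕ}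

include hP hN in
theorem IsTypeR.le_nth_isNegBlockEnd_of_mem_stage (hR : IsTypeR a σ) (hB : HasBBN σ C)
    {y lo j : ℕ} (hya : 0 < a y) (hy : y < Nat.nth (IsNegBlockEnd a) lo) (hj : lo + C ≤ j + 1)
    {z : ℕ} (hz : z ∈ stage σ (σ.symm y)) (hza : a z ≤ 0) : z ≤ Nat.nth (IsNegBlockEnd a) j := by
  have hNE := infinite_setOf_isNegBlockEnd hP hN
  by_contra! hjz
  refine (hB _).not_gt <|
    lt_blockCount_of_injective (Nat.nth_injective hNE) (lo := lo) hz fun t ht => ?_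
  rw [Finset.mem_Ico] at ht
  have hmt := Nat.nth_mem_of_infinite hNE t
  have hmtz : Nat.nth (IsNegBlockEnd a) t < z :=
    (Nat.nth_monotone hNE (by omega : t ≤ j)).trans_lt hjz
  refine ⟨hR.mem_stage_of_le hz hmtz.le (iff_of_false hmt.1.not_gt hza.not_gt),
    hR.notMem_stage_symm ?_ (iff_of_true hya hmt.2), hmtz⟩
  exact Nat.lt_succ_of_lt (hy.trans_le (Nat.nth_monotone hNE ht.1))

include h0 hP hN

theorem IsTypeR.lt_nth_isNegBlockEnd_of_mem_stage (hR : IsTypeR a σ) (hB : HasBBN σ C)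
    (b : ℕ) {y : ℕ} (hy : y ∈ stage σ (σ.symm (Nat.nth (IsNegBlockEnd a) b))) (hya : 0 < a y) :
    y < Nat.nth (IsNegBlockEnd a) (b + C) := by
  have hNE := infinite_setOf_isNegBlockEnd hP hN
  have hPE := infinite_setOf_isPosBlockEnd hP hN
  by_contra! hby
  refine (hB _).not_gt <|
    lt_blockCount_of_injective (Nat.nth_injective hPE) (lo := b) hy fun t ht => ?_
  rw [Finset.mem_Ico] at ht
  have hqt := Nat.nth_mem_of_infinite hPE t
  have hqty : Nat.nth (IsPosBlockEnd a) t < y :=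
    (nth_isPosBlockEnd_lt_nth_isNegBlockEnd_succ h0 hP hN t).trans_le
      ((Nat.nth_monotone hNE (by omega : t + 1 ≤ b + C)).trans hby)
  refine ⟨hR.mem_stage_of_le hy hqty.le (iff_of_true hqt.1 hya),
    hR.notMem_stage_symm ?_ (iff_of_false (Nat.nth_mem_of_infinite hNE b).1.not_gt
      hqt.2.not_gt), hqty⟩
  exact Nat.lt_succ_of_lt ((Nat.nth_monotone hNE ht.1).trans_lt
    (nth_isNegBlockEnd_lt_nth_isPosBlockEnd h0 hP hN t))

theorem SN_le_partialSum_sub_partialSum {σ₁ σ₂ : Equiv.Perm ℕ} {C₁ C₂ : ℕ}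
    (hR₁ : IsTypeR a σ₁) (hB₁ : HasBBN σ₁ C₁) (hR₂ : IsTypeR a σ₂) (hB₂ : HasBBN σ₂ C₂)
    (b : ℕ) {y : ℕ} (hy : y ∈ stage σ₁ (σ₁.symm (Nat.nth (IsNegBlockEnd a) b)))
    (hya : 0 < a y)
    (hmax : ∀ z ∈ stage σ₁ (σ₁.symm (Nat.nth (IsNegBlockEnd a) b)), 0 < a z → z ≤ y) :
    SN a (b + 2) (b + 2 * max C₁ C₂) ≤
      partialSum (fun k => a (σ₂ k)) (σ₂.symm y + 1) -
        partialSum (fun k => a (σ₁ k)) (σ₁.symm (Nat.nth (IsNegBlockEnd a) b) + 1) := by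
  have hNE := infinite_setOf_isNegBlockEnd hP hN
  set m := Nat.nth (IsNegBlockEnd a)
  have hC₁ : C₁ ≤ max C₁ C₂ := le_max_left _ _
  have hC₂ : C₂ ≤ max C₁ C₂ := le_max_right _ _
  have hC : 1 ≤ C₁ := hB₁.one_le
  obtain ⟨K, hK⟩ : ∃ K, b + 2 * max C₁ C₂ = K + 1 := ⟨b + 2 * max C₁ C₂ - 1, by omega⟩
  have hyK := hR₁.lt_nth_isNegBlockEnd_of_mem_stage h0 hP hN hB₁ b hy hya
  have hT₂ : (stage σ₂ (σ₂.symm y)).filter (a · ≤ 0) ⊆ (range (m K + 1)).filter (a · ≤ 0) :=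
    fun z hz => by
      rw [Finset.mem_filter] at hz ⊢
      refine ⟨Finset.mem_range.2 (Nat.lt_succ_of_le ?_), hz.2⟩
      exact hR₂.le_nth_isNegBlockEnd_of_mem_stage hP hN hB₂ hya hyK (j := K) (by omega) hz.1 hz.2
  have hpos : ∀ w z, 0 < a w → 0 < a z → (0 < a w ↔ 0 < a z) :=
    fun _ _ hw hz => iff_of_true hw hz
  have hnonpos : ∀ w z, a w ≤ 0 → a z ≤ 0 → (0 < a w ↔ 0 < a z) :=
    fun _ _ hw hz => iff_of_false hw.not_gt hz.not_gt
  rw [hK, SN_eq_sum_range_sub_sum_range h0 hP hN (by omega : b < K), ← Finset.sum_filter,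
    ← Finset.sum_filter, partialSum_comp_add_one, partialSum_comp_add_one,
    sum_eq_sum_filter_pos_add_sum_filter_nonpos _ (stage σ₁ _),
    sum_eq_sum_filter_pos_add_sum_filter_nonpos _ (stage σ₂ _),
    hR₁.filter_stage_eq hpos hy hya hmax, hR₂.filter_stage_symm hpos hya,
    hR₁.filter_stage_symm hnonpos (Nat.nth_mem_of_infinite hNE b).1]
  have := Finset.sum_le_sum_of_subset_of_nonpos' hT₂ fun z hz _ => (Finset.mem_filter.1 hz).2
  linarith

theorem exists_forall_SN_lt {σ₁ σ₂ : Equiv.Perm ℕ} {C₁ C₂ : ℕ} {r₁ r₂ : ℝ}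
    (hR₁ : IsTypeR a σ₁) (hB₁ : HasBBN σ₁ C₁) (hR₂ : IsTypeR a σ₂) (hB₂ : HasBBN σ₂ C₂)
    (hr₁ : ConvergesTo (fun n => a (σ₁ n)) r₁) (hr₂ : ConvergesTo (fun n => a (σ₂ n)) r₂)
    (hlt : r₂ < r₁) :
    ∃ k₀, ∀ b ≥ k₀, SN a (b + 2) (b + 2 * max C₁ C₂) < -((r₁ - r₂) / 2) := by
  have hNE := infinite_setOf_isNegBlockEnd hP hN
  set m := Nat.nth (IsNegBlockEnd a)
  obtain ⟨Y, hY⟩ := eventually_atTop.1 <|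
    (hr₂.comp <| (tendsto_add_atTop_nat 1).comp σ₂.symm.injective.nat_tendsto_atTop).eventually
      (eventually_lt_nhds (by linarith : r₂ < r₂ + (r₁ - r₂) / 4))
  obtain ⟨p, hp : 0 < a p, hYp⟩ := hP.exists_gt Y
  have hm : Tendsto (fun b => σ₁.symm (m b)) atTop atTop :=
    (σ₁.symm.injective.comp (Nat.nth_injective hNE)).nat_tendsto_atTop
  obtain ⟨k₀, hk₀⟩ := eventually_atTop.1 <|
    ((hr₁.comp <| (tendsto_add_atTop_nat 1).comp hm).eventually
      (eventually_gt_nhds (by linarith : r₁ - (r₁ - r₂) / 4 < r₁))).and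
    (hm.eventually_ge_atTop (σ₁.symm p))
  refine ⟨k₀, fun b hb => ?_⟩
  obtain ⟨hS₁, hpb⟩ := hk₀ b hb
  obtain ⟨y, hy, hymax⟩ := ((stage σ₁ (σ₁.symm (m b))).filter (0 < a ·)).exists_max_image id
    ⟨p, Finset.mem_filter.2 ⟨mem_stage.2 hpb, hp⟩⟩
  rw [Finset.mem_filter] at hy
  have hSN := SN_le_partialSum_sub_partialSum h0 hP hN hR₁ hB₁ hR₂ hB₂ b hy.1 hy.2
    fun z hz hza => hymax z (Finset.mem_filter.2 ⟨hz, hza⟩)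
  have hS₂ := hY y (hYp.le.trans (hymax p (Finset.mem_filter.2 ⟨mem_stage.2 hpb, hp⟩)))
  simp only [Function.comp_apply] at hS₁ hS₂
  linarith

end Bounds

/-- If `σ₁, σ₂` are type R λ-permutations with bounded block
numbers `C₁, C₂` rearranging the series to `r₁ > r₂`, then with `C = max C₁ C₂`
there is `k₀` such that `S_{[N_{i+1},N_{i+2C−1}]} < −(r₁ − r₂)/2` for all
`i > k₀`; in particular the series satisfies `ST_N`. -/
theorem statement5 (a : ℕ → ℝ) (h0 : a 0 ≤ 0)
    (hP : {n : ℕ | 0 < a n}.Infinite) (hN : {n : ℕ | a n ≤ 0}.Infinite)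
    (σ₁ σ₂ : Equiv.Perm ℕ) (C₁ C₂ : ℕ) (r₁ r₂ : ℝ)
    (hR₁ : IsTypeR a σ₁) (hB₁ : HasBBN σ₁ C₁)
    (hR₂ : IsTypeR a σ₂) (hB₂ : HasBBN σ₂ C₂)
    (hr₁ : ConvergesTo (fun n => a (σ₁ n)) r₁)
    (hr₂ : ConvergesTo (fun n => a (σ₂ n)) r₂)
    (hlt : r₂ < r₁) :
    (∃ k₀ : ℕ, ∀ i > k₀,
      SN a (i + 1) (i + 2 * max C₁ C₂ - 1) < -((r₁ - r₂) / 2)) ∧ STN a := by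
  have hC : 1 ≤ max C₁ C₂ := hB₁.one_le.trans (le_max_left _ _)
  obtain ⟨k₀, hk₀⟩ := exists_forall_SN_lt h0 hP hN hR₁ hB₁ hR₂ hB₂ hr₁ hr₂ hlt
  refine ⟨⟨k₀, fun i hi => ?_⟩, 2 * max C₁ C₂ - 2, (r₁ - r₂) / 2, by linarith, k₀ + 1,
    fun i hi => ?_⟩
  · obtain ⟨b, rfl⟩ : ∃ b, i = b + 1 := ⟨i - 1, by omega⟩
    rw [show b + 1 + 2 * max C₁ C₂ - 1 = b + 2 * max C₁ C₂ by omega]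
    exact hk₀ b (by omega)
  · obtain ⟨b, rfl⟩ : ∃ b, i = b + 2 := ⟨i - 2, by omega⟩
    rw [show b + 2 + (2 * max C₁ C₂ - 2) = b + 2 * max C₁ C₂ by omega]
    exact (hk₀ b (by omega)).le
end
end

section
/- Let ∑_{n=0}^∞ a_n be a series of real numbers such that Σ_{n=0}^∞ max(a_n, 0) = +∞, Σ_{n=0}^∞ min(a_n, 0) = −∞, and a_n → 0 as n → ∞. Then for every r ∈ ℝ there exists a type R permutation σ of the series with ∑_{n=0}^∞ a_{σ(n)} = r. In particular, every conditionally divergent series can be rearranged by a type R permutation to converge to any prescribed real number. -/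
open Filter Finset

noncomputable section
open scoped Classical

namespace St8

variable (a : ℕ → ℝ) (r : ℝ)

def p (k : ℕ) : ℕ := Nat.nth (fun n => 0 < a n) k
def q (k : ℕ) : ℕ := Nat.nth (fun n => a n ≤ 0) k
def Tp (K : ℕ) : ℝ := ∑ k ∈ Finset.range K, a (p a k)
def Tn (K : ℕ) : ℝ := ∑ k ∈ Finset.range K, a (q a k)

def c : ℕ → ℕ × ℕ
  | 0 => (0, 0)
  | n + 1 => if Tp a (c n).1 + Tn a (c n).2 ≤ r then ((c n).1 + 1, (c n).2)
             else ((c n).1, (c n).2 + 1)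

def S (n : ℕ) : ℝ := Tp a (c a r n).1 + Tn a (c a r n).2

def b (n : ℕ) : ℕ := if S a r n ≤ r then p a (c a r n).1 else q a (c a r n).2

lemma c_succ (n : ℕ) :
    c a r (n + 1) = if S a r n ≤ r then ((c a r n).1 + 1, (c a r n).2)
      else ((c a r n).1, (c a r n).2 + 1) := rfl

variable {a r}
variable (hP : {n | 0 < a n}.Infinite) (hN : {n | a n ≤ 0}.Infinite)

include hP in
lemma p_mono : StrictMono (p a) := Nat.nth_strictMono hP
include hN in
lemma q_mono : StrictMono (q a) := Nat.nth_strictMono hN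
include hP in
lemma p_pos (k : ℕ) : 0 < a (p a k) := Nat.nth_mem_of_infinite hP k
include hN in
lemma q_nonpos (k : ℕ) : a (q a k) ≤ 0 := Nat.nth_mem_of_infinite hN k

lemma Tp_count (n : ℕ) :
    Tp a (Nat.count (fun n => 0 < a n) n) = ∑ i ∈ Finset.range n, max (a i) 0 := by
  induction n with
  | zero => simp [Tp]
  | succ n ih =>
    rw [Nat.count_succ, Finset.sum_range_succ]
    by_cases h : 0 < a n
    · rw [if_pos h,
        show Tp a (Nat.count (fun n => 0 < a n) n + 1)
          = Tp a (Nat.count (fun n => 0 < a n) n) + a (p a (Nat.count (fun n => 0 < a n) n)) from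
          Finset.sum_range_succ _ _, ih,
        show p a (Nat.count (fun n => 0 < a n) n) = n from Nat.nth_count h, max_eq_left h.le]
    · rw [if_neg h, add_zero, ih, max_eq_right (not_lt.1 h), add_zero]

lemma Tn_count (n : ℕ) :
    Tn a (Nat.count (fun n => a n ≤ 0) n) = ∑ i ∈ Finset.range n, min (a i) 0 := by
  induction n with
  | zero => simp [Tn]
  | succ n ih =>
    rw [Nat.count_succ, Finset.sum_range_succ]
    by_cases h : a n ≤ 0
    · rw [if_pos h,
        show Tn a (Nat.count (fun n => a n ≤ 0) n + 1)
          = Tn a (Nat.count (fun n => a n ≤ 0) n) + a (q a (Nat.count (fun n => a n ≤ 0) n)) from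
          Finset.sum_range_succ _ _, ih,
        show q a (Nat.count (fun n => a n ≤ 0) n) = n from Nat.nth_count h, min_eq_left h]
    · rw [if_neg h, add_zero, ih, min_eq_right (le_of_lt (not_le.1 h)), add_zero]

include hP in
lemma Tp_monotone : Monotone (Tp a) := by
  apply monotone_nat_of_le_succ
  intro K
  have : Tp a (K + 1) = Tp a K + a (p a K) := Finset.sum_range_succ _ _
  rw [this]
  linarith [p_pos hP K]

include hN in
lemma Tn_antitone : Antitone (Tn a) := by
  apply antitone_nat_of_succ_le
  intro K
  have : Tn a (K + 1) = Tn a K + a (q a K) := Finset.sum_range_succ _ _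
  rw [this]
  linarith [q_nonpos hN K]

include hP in
lemma Tp_atTop
    (hpos : Filter.Tendsto (fun n => ∑ i ∈ Finset.range n, max (a i) 0)
      Filter.atTop Filter.atTop) : Tendsto (Tp a) atTop atTop := by
  rw [tendsto_atTop]
  intro M
  obtain ⟨n, hn⟩ := (tendsto_atTop.1 hpos M).exists
  refine eventually_atTop.2 ⟨Nat.count (fun n => 0 < a n) n, fun K hK => ?_⟩
  calc M ≤ ∑ i ∈ Finset.range n, max (a i) 0 := hn
    _ = Tp a (Nat.count (fun n => 0 < a n) n) := (Tp_count n).symm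
    _ ≤ Tp a K := Tp_monotone hP hK

include hN in
lemma Tn_atBot
    (hneg : Filter.Tendsto (fun n => ∑ i ∈ Finset.range n, min (a i) 0)
      Filter.atTop Filter.atBot) : Tendsto (Tn a) atTop atBot := by
  rw [tendsto_atBot]
  intro M
  obtain ⟨n, hn⟩ := (tendsto_atBot.1 hneg M).exists
  refine eventually_atTop.2 ⟨Nat.count (fun n => a n ≤ 0) n, fun K hK => ?_⟩
  calc Tn a K ≤ Tn a (Nat.count (fun n => a n ≤ 0) n) := Tn_antitone hN hK
    _ = ∑ i ∈ Finset.range n, min (a i) 0 := Tn_count n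
    _ ≤ M := hn

variable (a r)

lemma i_mono : Monotone (fun n => (c a r n).1) := by
  apply monotone_nat_of_le_succ
  intro n
  rw [c_succ]
  split <;> simp

lemma j_mono : Monotone (fun n => (c a r n).2) := by
  apply monotone_nat_of_le_succ
  intro n
  rw [c_succ]
  split <;> simp

lemma i_succ_le (n : ℕ) : (c a r (n+1)).1 ≤ (c a r n).1 + 1 := by
  rw [c_succ]; split <;> simp

lemma partialSum_eq (n : ℕ) : partialSum (fun m => a (b a r m)) n = S a r n := by
  induction n with
  | zero => simp [partialSum, S, Tp, Tn, c]
  | succ n ih =>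
    have hps : partialSum (fun m => a (b a r m)) (n+1)
        = partialSum (fun m => a (b a r m)) n + a (b a r n) := Finset.sum_range_succ _ _
    rw [hps, ih]
    by_cases h : S a r n ≤ r
    · have hb : b a r n = p a (c a r n).1 := if_pos h
      have hc : c a r (n+1) = ((c a r n).1 + 1, (c a r n).2) := by rw [c_succ, if_pos h]
      rw [hb]
      simp only [S, hc]
      rw [show Tp a ((c a r n).1 + 1) = Tp a (c a r n).1 + a (p a (c a r n).1) from
        Finset.sum_range_succ _ _]
      ring
    · have hb : b a r n = q a (c a r n).2 := if_neg h
      have hc : c a r (n+1) = ((c a r n).1, (c a r n).2 + 1) := by rw [c_succ, if_neg h]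
      rw [hb]
      simp only [S, hc]
      rw [show Tn a ((c a r n).2 + 1) = Tn a (c a r n).2 + a (q a (c a r n).2) from
        Finset.sum_range_succ _ _]
      ring

variable {a r}


include hN in
lemma exists_pos_pick
    (hneg : Filter.Tendsto (fun n => ∑ i ∈ Finset.range n, min (a i) 0)
      Filter.atTop Filter.atBot)
    (n : ℕ) : ∃ m, n ≤ m ∧ S a r m ≤ r := by
  by_contra hcon
  push_neg at hcon
  have hstep : ∀ m, n ≤ m → c a r m = ((c a r n).1, (c a r n).2 + (m - n)) := by
    intro m hm
    induction m with
    | zero => simp_all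
    | succ m ih =>
      rcases Nat.lt_or_ge n (m+1) with h1 | h1
      · have hnm : n ≤ m := Nat.lt_succ_iff.1 h1
        rw [c_succ, if_neg (not_le.2 (hcon m hnm)), ih hnm]
        simp [Prod.ext_iff] <;> omega
      · have : n = m + 1 := le_antisymm hm h1
        subst this; simp
  obtain ⟨J, hJ1, hJ2⟩ := ((tendsto_atBot.1 (Tn_atBot hN hneg) (r - Tp a (c a r n).1)).and
    (eventually_ge_atTop (c a r n).2)).exists
  have hm := hstep (n + (J - (c a r n).2)) (Nat.le_add_right _ _)
  rw [Nat.add_sub_cancel_left, Nat.add_sub_cancel' hJ2] at hm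
  have h1 := hcon _ (Nat.le_add_right n (J - (c a r n).2))
  rw [S, hm] at h1
  simp only at h1
  linarith

include hP in
lemma exists_neg_pick
    (hpos : Filter.Tendsto (fun n => ∑ i ∈ Finset.range n, max (a i) 0)
      Filter.atTop Filter.atTop)
    (n : ℕ) : ∃ m, n ≤ m ∧ r < S a r m := by
  by_contra hcon
  push_neg at hcon
  have hstep : ∀ m, n ≤ m → c a r m = ((c a r n).1 + (m - n), (c a r n).2) := by
    intro m hm
    induction m with
    | zero => simp_all
    | succ m ih =>
      rcases Nat.lt_or_ge n (m+1) with h1 | h1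
      · have hnm : n ≤ m := Nat.lt_succ_iff.1 h1
        rw [c_succ, if_pos (hcon m hnm), ih hnm]
        simp [Prod.ext_iff] <;> omega
      · have : n = m + 1 := le_antisymm hm h1
        subst this; simp
  obtain ⟨J, hJ1, hJ2⟩ := ((tendsto_atTop.1 (Tp_atTop hP hpos) (r + 1 - Tn a (c a r n).2)).and
    (eventually_ge_atTop (c a r n).1)).exists
  have hm := hstep (n + (J - (c a r n).1)) (Nat.le_add_right _ _)
  rw [Nat.add_sub_cancel_left, Nat.add_sub_cancel' hJ2] at hm
  have h1 := hcon _ (Nat.le_add_right n (J - (c a r n).1))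
  rw [S, hm] at h1
  simp only at h1
  linarith

include hN in
lemma i_atTop
    (hpos : Filter.Tendsto (fun n => ∑ i ∈ Finset.range n, max (a i) 0)
      Filter.atTop Filter.atTop)
    (hneg : Filter.Tendsto (fun n => ∑ i ∈ Finset.range n, min (a i) 0)
      Filter.atTop Filter.atBot) :
    Tendsto (fun n => (c a r n).1) atTop atTop := by
  apply tendsto_atTop_atTop_of_monotone (i_mono a r)
  intro K
  induction K with
  | zero => exact ⟨0, Nat.zero_le _⟩
  | succ K ih =>
    obtain ⟨n, hn⟩ := ih
    obtain ⟨m, hnm, hm⟩ := exists_pos_pick hN hneg n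
    refine ⟨m + 1, ?_⟩
    have : c a r (m+1) = ((c a r m).1 + 1, (c a r m).2) := by rw [c_succ, if_pos hm]
    rw [this]
    have : (c a r n).1 ≤ (c a r m).1 := i_mono a r hnm
    omega

include hP in
lemma j_atTop
    (hpos : Filter.Tendsto (fun n => ∑ i ∈ Finset.range n, max (a i) 0)
      Filter.atTop Filter.atTop) :
    Tendsto (fun n => (c a r n).2) atTop atTop := by
  apply tendsto_atTop_atTop_of_monotone (j_mono a r)
  intro K
  induction K with
  | zero => exact ⟨0, Nat.zero_le _⟩
  | succ K ih =>
    obtain ⟨n, hn⟩ := ih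
    obtain ⟨m, hnm, hm⟩ := exists_neg_pick hP hpos n
    refine ⟨m + 1, ?_⟩
    have : c a r (m+1) = ((c a r m).1, (c a r m).2 + 1) := by rw [c_succ, if_neg (not_le.2 hm)]
    rw [this]
    have : (c a r n).2 ≤ (c a r m).2 := j_mono a r hnm
    omega

include hP hN in
lemma b_inj : Function.Injective (b a r) := by
  have key : ∀ m n : ℕ, m < n → b a r m ≠ b a r n := by
    intro m n hmn
    by_cases hm : S a r m ≤ r <;> by_cases hn : S a r n ≤ r
    · -- both positive picks
      rw [b, if_pos hm, b, if_pos hn]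
      intro heq
      have h1 : (c a r m).1 = (c a r n).1 := (p_mono hP).injective heq
      have h2 : (c a r (m+1)).1 = (c a r m).1 + 1 := by rw [c_succ, if_pos hm]
      have h3 : (c a r (m+1)).1 ≤ (c a r n).1 := i_mono a r hmn
      omega
    · rw [b, if_pos hm, b, if_neg hn]
      intro heq
      have := p_pos hP (c a r m).1
      rw [heq] at this
      exact absurd this (not_lt.2 (q_nonpos hN _))
    · rw [b, if_neg hm, b, if_pos hn]
      intro heq
      have := p_pos hP (c a r n).1
      rw [← heq] at this
      exact absurd this (not_lt.2 (q_nonpos hN _))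
    · rw [b, if_neg hm, b, if_neg hn]
      intro heq
      have h1 : (c a r m).2 = (c a r n).2 := (q_mono hN).injective heq
      have h2 : (c a r (m+1)).2 = (c a r m).2 + 1 := by rw [c_succ, if_neg hm]
      have h3 : (c a r (m+1)).2 ≤ (c a r n).2 := j_mono a r hmn
      omega
  intro m n heq
  by_contra hne
  rcases Nat.lt_or_ge m n with h | h
  · exact key m n h heq
  · exact key n m (lt_of_le_of_ne h (Ne.symm hne)) heq.symm

lemma exists_step_i (K : ℕ)
    (hi : Tendsto (fun n => (c a r n).1) atTop atTop) :
    ∃ n, (c a r n).1 = K ∧ S a r n ≤ r := by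
  have hex : ∃ n, K < (c a r n).1 := (hi.eventually (eventually_gt_atTop K)).exists
  have hfind := Nat.find_spec hex
  have hn0 : Nat.find hex ≠ 0 := by
    intro h
    rw [h] at hfind
    simp [c] at hfind
  obtain ⟨m, hm'⟩ : ∃ m, Nat.find hex = m + 1 := ⟨Nat.find hex - 1, by omega⟩
  have hm : ¬ K < (c a r m).1 := Nat.find_min hex (by omega)
  rw [hm'] at hfind
  push_neg at hm
  have hstep : S a r m ≤ r := by
    by_contra hc
    have : c a r (m+1) = ((c a r m).1, (c a r m).2 + 1) := by rw [c_succ, if_neg hc]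
    rw [this] at hfind
    omega
  have : (c a r (m+1)).1 = (c a r m).1 + 1 := by rw [c_succ, if_pos hstep]
  have hK : (c a r m).1 = K := by omega
  exact ⟨m, hK, hstep⟩

lemma exists_step_j (K : ℕ)
    (hj : Tendsto (fun n => (c a r n).2) atTop atTop) :
    ∃ n, (c a r n).2 = K ∧ ¬ S a r n ≤ r := by
  have hex : ∃ n, K < (c a r n).2 := (hj.eventually (eventually_gt_atTop K)).exists
  have hfind := Nat.find_spec hex
  have hn0 : Nat.find hex ≠ 0 := by
    intro h
    rw [h] at hfind
    simp [c] at hfind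
  obtain ⟨m, hm'⟩ : ∃ m, Nat.find hex = m + 1 := ⟨Nat.find hex - 1, by omega⟩
  have hm : ¬ K < (c a r m).2 := Nat.find_min hex (by omega)
  rw [hm'] at hfind
  push_neg at hm
  have hstep : ¬ S a r m ≤ r := by
    by_contra hc
    have : c a r (m+1) = ((c a r m).1 + 1, (c a r m).2) := by rw [c_succ, if_pos hc]
    rw [this] at hfind
    omega
  have : (c a r (m+1)).2 = (c a r m).2 + 1 := by rw [c_succ, if_neg hstep]
  have hK : (c a r m).2 = K := by omega
  exact ⟨m, hK, hstep⟩

lemma b_surj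
    (hi : Tendsto (fun n => (c a r n).1) atTop atTop)
    (hj : Tendsto (fun n => (c a r n).2) atTop atTop) :
    Function.Surjective (b a r) := by
  intro t
  by_cases ht : 0 < a t
  · obtain ⟨n, hn1, hn2⟩ := exists_step_i (K := Nat.count (fun n => 0 < a n) t) hi
    refine ⟨n, ?_⟩
    rw [b, if_pos hn2, hn1, p, Nat.nth_count ht]
  · obtain ⟨n, hn1, hn2⟩ := exists_step_j (K := Nat.count (fun n => a n ≤ 0) t) hj
    refine ⟨n, ?_⟩
    rw [b, if_neg hn2, hn1, q, Nat.nth_count (p := fun n => a n ≤ 0) (not_lt.1 ht)]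

variable (a r) in
lemma S_succ_pos {n : ℕ} (h : S a r n ≤ r) :
    S a r (n+1) = S a r n + a (p a (c a r n).1) := by
  have hb : c a r (n+1) = ((c a r n).1 + 1, (c a r n).2) := by rw [c_succ, if_pos h]
  rw [S, hb]
  simp only
  rw [show Tp a ((c a r n).1 + 1) = Tp a (c a r n).1 + a (p a (c a r n).1) from
    Finset.sum_range_succ _ _, S]
  ring

variable (a r) in
lemma S_succ_neg {n : ℕ} (h : ¬ S a r n ≤ r) :
    S a r (n+1) = S a r n + a (q a (c a r n).2) := by
  have hb : c a r (n+1) = ((c a r n).1, (c a r n).2 + 1) := by rw [c_succ, if_neg h]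
  rw [S, hb]
  simp only
  rw [show Tn a ((c a r n).2 + 1) = Tn a (c a r n).2 + a (q a (c a r n).2) from
    Finset.sum_range_succ _ _, S]
  ring

include hP hN in
lemma b_typeR : ∀ m n : ℕ, b a r m < b a r n →
    ((0 < a (b a r m) ∧ 0 < a (b a r n)) ∨ (a (b a r m) ≤ 0 ∧ a (b a r n) ≤ 0)) →
    m < n := by
  intro m n hlt hsign
  by_cases hm : S a r m ≤ r <;> by_cases hn : S a r n ≤ r
  · have hbm : b a r m = p a (c a r m).1 := if_pos hm
    have hbn : b a r n = p a (c a r n).1 := if_pos hn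
    rw [hbm, hbn] at hlt
    have hcc : (c a r m).1 < (c a r n).1 := (p_mono hP).lt_iff_lt.1 hlt
    by_contra hle
    push_neg at hle
    exact absurd (i_mono a r hle) (not_le.2 hcc)
  · have hbm : b a r m = p a (c a r m).1 := if_pos hm
    have hbn : b a r n = q a (c a r n).2 := if_neg hn
    have h1 : 0 < a (b a r m) := hbm ▸ p_pos hP _
    have h2 : a (b a r n) ≤ 0 := hbn ▸ q_nonpos hN _
    rcases hsign with ⟨_, h⟩ | ⟨h, _⟩ <;> linarith
  · have hbm : b a r m = q a (c a r m).2 := if_neg hm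
    have hbn : b a r n = p a (c a r n).1 := if_pos hn
    have h1 : a (b a r m) ≤ 0 := hbm ▸ q_nonpos hN _
    have h2 : 0 < a (b a r n) := hbn ▸ p_pos hP _
    rcases hsign with ⟨h, _⟩ | ⟨_, h⟩ <;> linarith
  · have hbm : b a r m = q a (c a r m).2 := if_neg hm
    have hbn : b a r n = q a (c a r n).2 := if_neg hn
    rw [hbm, hbn] at hlt
    have hcc : (c a r m).2 < (c a r n).2 := (q_mono hN).lt_iff_lt.1 hlt
    by_contra hle
    push_neg at hle
    exact absurd (j_mono a r hle) (not_le.2 hcc)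

include hP hN in
lemma S_tendsto
    (hpos : Filter.Tendsto (fun n => ∑ i ∈ Finset.range n, max (a i) 0)
      Filter.atTop Filter.atTop)
    (hneg : Filter.Tendsto (fun n => ∑ i ∈ Finset.range n, min (a i) 0)
      Filter.atTop Filter.atBot)
    (h0 : Filter.Tendsto a Filter.atTop (nhds 0)) :
    Tendsto (S a r) atTop (nhds r) := by
  rw [Metric.tendsto_atTop]
  intro ε hε
  have hε2 : 0 < ε / 2 := by linarith
  have hap : Tendsto (fun k => a (p a k)) atTop (nhds 0) :=
    h0.comp (tendsto_atTop_mono (fun k => (p_mono hP).le_apply) tendsto_id)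
  have haq : Tendsto (fun k => a (q a k)) atTop (nhds 0) :=
    h0.comp (tendsto_atTop_mono (fun k => (q_mono hN).le_apply) tendsto_id)
  obtain ⟨K, hK⟩ := eventually_atTop.1
    ((hap.eventually (Metric.ball_mem_nhds (0:ℝ) hε2)).and
     (haq.eventually (Metric.ball_mem_nhds (0:ℝ) hε2)))
  have hsmall : ∀ k, K ≤ k → |a (p a k)| < ε/2 ∧ |a (q a k)| < ε/2 := by
    intro k hk
    simpa [Real.dist_eq] using hK k hk
  obtain ⟨N₀, hN₀⟩ := eventually_atTop.1
    (((i_atTop (r := r) hN hpos hneg).eventually (eventually_ge_atTop K)).and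
     ((j_atTop (r := r) hP hpos).eventually (eventually_ge_atTop K)))
  have hclaim : ∃ N₁, N₀ ≤ N₁ ∧ |S a r N₁ - r| ≤ ε/2 := by
    by_contra hcon
    push_neg at hcon
    by_cases hc : S a r N₀ ≤ r
    · have hind : ∀ n, N₀ ≤ n → S a r n < r - ε/2 := by
        intro n hn
        induction n, hn using Nat.le_induction with
        | base =>
          have h1 := hcon N₀ le_rfl
          rw [abs_of_nonpos (by linarith)] at h1
          linarith
        | succ n hn ih =>
          have hle : S a r n ≤ r := by linarith
          have hKn := (hN₀ n hn).1
          have hsm := (hsmall _ hKn).1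
          rw [abs_lt] at hsm
          have hS := S_succ_pos a r hle
          have hle2 : S a r (n+1) ≤ r := by linarith
          have h1 := hcon (n+1) (by omega)
          rw [abs_of_nonpos (by linarith)] at h1
          linarith
      obtain ⟨m, hm1, hm2⟩ := exists_neg_pick (r := r) hP hpos N₀
      have := hind m hm1
      linarith
    · push_neg at hc
      have hind : ∀ n, N₀ ≤ n → r + ε/2 < S a r n := by
        intro n hn
        induction n, hn using Nat.le_induction with
        | base =>
          have h1 := hcon N₀ le_rfl
          rw [abs_of_nonneg (by linarith)] at h1
          linarith
        | succ n hn ih =>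
          have hle : ¬ S a r n ≤ r := by push_neg; linarith
          have hKn := (hN₀ n hn).2
          have hsm := (hsmall _ hKn).2
          rw [abs_lt] at hsm
          have hS := S_succ_neg a r hle
          have hgt2 : r < S a r (n+1) := by linarith
          have h1 := hcon (n+1) (by omega)
          rw [abs_of_nonneg (by linarith)] at h1
          linarith
      obtain ⟨m, hm1, hm2⟩ := exists_pos_pick (r := r) hN hneg N₀
      have := hind m hm1
      linarith
  obtain ⟨N₁, hN₁ge, hN₁⟩ := hclaim
  have hinv : ∀ n, N₁ ≤ n → |S a r n - r| ≤ ε/2 := by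
    intro n hn
    induction n, hn using Nat.le_induction with
    | base => exact hN₁
    | succ n hn ih =>
      have hKn := hN₀ n (le_trans hN₁ge hn)
      rw [abs_sub_le_iff] at ih ⊢
      by_cases hc : S a r n ≤ r
      · have hS := S_succ_pos a r hc
        have hsm := (hsmall _ hKn.1).1
        have hpp := p_pos hP (c a r n).1
        rw [abs_lt] at hsm
        constructor <;> linarith
      · push_neg at hc
        have hS := S_succ_neg a r (not_le.2 hc)
        have hsm := (hsmall _ hKn.2).2
        have hqq := q_nonpos hN (c a r n).2
        rw [abs_lt] at hsm
        constructor <;> linarith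
  refine ⟨N₁, fun n hn => ?_⟩
  rw [Real.dist_eq]
  calc |S a r n - r| ≤ ε/2 := hinv n hn
    _ < ε := by linarith

end St8

/-- If the positive parts of `∑ a n` sum to `+∞`, the nonpositive
parts sum to `−∞`, and `a n → 0`, then for every real `r` there is a type R
permutation rearranging the series to converge to `r`. -/
theorem statement8 (a : ℕ → ℝ)
    (hpos : Filter.Tendsto (fun n => ∑ i ∈ Finset.range n, max (a i) 0)
      Filter.atTop Filter.atTop)
    (hneg : Filter.Tendsto (fun n => ∑ i ∈ Finset.range n, min (a i) 0)
      Filter.atTop Filter.atBot)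
    (h0 : Filter.Tendsto a Filter.atTop (nhds 0)) :
    ∀ r : ℝ, ∃ σ : Equiv.Perm ℕ, IsTypeR a σ ∧ ConvergesTo (fun n => a (σ n)) r := by
  intro r
  have hP : {n | 0 < a n}.Infinite := by
    by_contra hf
    rw [Set.not_infinite] at hf
    obtain ⟨N, hb⟩ := hf.bddAbove
    have hconst : ∀ n, N + 1 ≤ n →
        ∑ i ∈ Finset.range n, max (a i) 0 = ∑ i ∈ Finset.range (N+1), max (a i) 0 := by
      intro n hn
      refine (Finset.sum_subset (Finset.range_subset_range.2 hn) ?_).symm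
      intro i hi hni
      simp only [Finset.mem_range, not_lt] at hni
      have : ¬ 0 < a i := fun h => by
        have := hb h
        omega
      exact max_eq_right (not_lt.1 this)
    obtain ⟨n, hn1, hn2⟩ := ((tendsto_atTop.1 hpos
      ((∑ i ∈ Finset.range (N+1), max (a i) 0) + 1)).and (eventually_ge_atTop (N+1))).exists
    rw [hconst n hn2] at hn1
    linarith
  have hN : {n | a n ≤ 0}.Infinite := by
    by_contra hf
    rw [Set.not_infinite] at hf
    obtain ⟨N, hb⟩ := hf.bddAbove
    have hconst : ∀ n, N + 1 ≤ n →
        ∑ i ∈ Finset.range n, min (a i) 0 = ∑ i ∈ Finset.range (N+1), min (a i) 0 := by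
      intro n hn
      refine (Finset.sum_subset (Finset.range_subset_range.2 hn) ?_).symm
      intro i hi hni
      simp only [Finset.mem_range, not_lt] at hni
      have : ¬ a i ≤ 0 := fun h => by
        have := hb h
        omega
      exact min_eq_right (le_of_lt (not_le.1 this))
    obtain ⟨n, hn1, hn2⟩ := ((tendsto_atBot.1 hneg
      ((∑ i ∈ Finset.range (N+1), min (a i) 0) - 1)).and (eventually_ge_atTop (N+1))).exists
    rw [hconst n hn2] at hn1
    linarith
  have hbij : Function.Bijective (St8.b a r) :=
    ⟨St8.b_inj hP hN, St8.b_surj (St8.i_atTop hN hpos hneg) (St8.j_atTop hP hpos)⟩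
  refine ⟨Equiv.ofBijective _ hbij, ?_, ?_⟩
  · intro i j hij hsign
    exact St8.b_typeR hP hN i j hij hsign
  · show Tendsto (partialSum fun n => a (St8.b a r n)) atTop (nhds r)
    have heq : partialSum (fun m => a (St8.b a r m)) = St8.S a r :=
      funext (St8.partialSum_eq a r)
    rw [heq]
    exact St8.S_tendsto hP hN hpos hneg h0
end
end

section
/- The example series ∑_{n=0}^∞ a_n diverges: its sequence of partial sums does not converge. (Indeed, the partial sum equals 0 at the end of each block B_k, while within the block B_{j²} the partial sum reaches the value 1 after the j² positive terms; hence the partial sums take the values 0 and 1 each infinitely often.) -/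
open Filter Finset

noncomputable section
open scoped Classical

/-- Length of the `k`-th block of the example series: `2k` if `k` is a perfect
square, otherwise `2`. -/
def exBlockLen (k : ℕ) : ℕ := if Nat.sqrt k * Nat.sqrt k = k then 2 * k else 2

/-- Starting index (in the example series) of the `k`-th block (`k ≥ 1`). -/
def exBlockStart (k : ℕ) : ℕ := ∑ j ∈ Finset.Ico 1 k, exBlockLen j

/-- The index `k ≥ 1` of the block containing position `n` of the example series. -/
def exBlockIdx (n : ℕ) : ℕ := Nat.findGreatest (fun k => exBlockStart k ≤ n) (n + 1)

/-- The example series: the concatenation, for `k = 1, 2, 3, …`, of the blocks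
`B_k`, where `B_k` consists of `k` copies of `1/k` followed by `k` copies of
`-1/k` if `k` is a perfect square, and `B_k = (1/k, -1/k)` otherwise. -/
def exA (n : ℕ) : ℝ :=
  let k := exBlockIdx n
  let o := n - exBlockStart k
  if Nat.sqrt k * Nat.sqrt k = k then
    (if o < k then (1 : ℝ) / (k : ℝ) else -((1 : ℝ) / (k : ℝ)))
  else (if o = 0 then (1 : ℝ) / (k : ℝ) else -((1 : ℝ) / (k : ℝ)))


/-! Every block sums to zero, so the partial sums vanish at every block boundary, while inside
the block `B_{m²}` they reach `1` after its `m²` positive terms. A sequence taking the values `0`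
and `1` infinitely often has no limit. -/

lemma partialSum_add_sum_Ico (a : ℕ → ℝ) {m n : ℕ} (h : m ≤ n) :
    partialSum a m + ∑ i ∈ Ico m n, a i = partialSum a n :=
  sum_range_add_sum_Ico a h

lemma not_converges_of_frequently_eq {a : ℕ → ℝ} {x y : ℝ} (hxy : x ≠ y)
    (hx : ∃ᶠ n in atTop, partialSum a n = x) (hy : ∃ᶠ n in atTop, partialSum a n = y) :
    ¬ Converges a := by
  rintro ⟨L, hL⟩
  have hLx : L = x := isClosed_singleton.mem_of_frequently_of_tendsto hx hL
  have hLy : L = y := isClosed_singleton.mem_of_frequently_of_tendsto hy hL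
  exact hxy (hLx.symm.trans hLy)

lemma two_le_exBlockLen {k : ℕ} (hk : 1 ≤ k) : 2 ≤ exBlockLen k := by
  unfold exBlockLen
  split <;> omega

lemma exBlockStart_succ (k : ℕ) : exBlockStart (k + 1) = exBlockStart k + exBlockLen k := by
  rcases Nat.eq_zero_or_pos k with rfl | hk
  · simp [exBlockStart, exBlockLen]
  · exact sum_Ico_succ_top hk _

lemma exBlockStart_mono : Monotone exBlockStart :=
  fun _ _ h => sum_le_sum_of_subset (Ico_subset_Ico le_rfl h)

lemma le_exBlockStart_succ (k : ℕ) : k ≤ exBlockStart (k + 1) := by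
  induction k with
  | zero => simp
  | succ n ih =>
    have := two_le_exBlockLen (k := n + 1) (by omega)
    rw [exBlockStart_succ]
    omega

lemma exBlockIdx_eq {k n : ℕ} (hk : 1 ≤ k) (h₁ : exBlockStart k ≤ n)
    (h₂ : n < exBlockStart (k + 1)) : exBlockIdx n = k := by
  unfold exBlockIdx
  rw [Nat.findGreatest_eq_iff]
  refine ⟨?_, fun _ => h₁, fun m hkm _ hm => ?_⟩
  · have := le_exBlockStart_succ (k - 1)
    rw [Nat.sub_add_cancel hk] at this
    omega
  · have : exBlockStart (k + 1) ≤ exBlockStart m := exBlockStart_mono hkm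
    omega

lemma exA_of_mem_block {k n : ℕ} (hk : 1 ≤ k) (h₁ : exBlockStart k ≤ n)
    (h₂ : n < exBlockStart (k + 1)) :
    exA n = if Nat.sqrt k * Nat.sqrt k = k then
      (if n - exBlockStart k < k then (1 : ℝ) / k else -((1 : ℝ) / k))
    else (if n - exBlockStart k = 0 then (1 : ℝ) / k else -((1 : ℝ) / k)) := by
  simp only [exA, exBlockIdx_eq hk h₁ h₂]

lemma exBlockStart_succ_of_sq {k : ℕ} (hsq : Nat.sqrt k * Nat.sqrt k = k) :
    exBlockStart (k + 1) = exBlockStart k + k + k := by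
  rw [exBlockStart_succ, exBlockLen, if_pos hsq]
  ring

lemma sum_exA_pos_half {k : ℕ} (hk : 1 ≤ k) (hsq : Nat.sqrt k * Nat.sqrt k = k) :
    ∑ n ∈ Ico (exBlockStart k) (exBlockStart k + k), exA n = 1 := by
  have hterm : ∀ n ∈ Ico (exBlockStart k) (exBlockStart k + k), exA n = 1 / k := by
    intro n hn
    rw [mem_Ico] at hn
    rw [exA_of_mem_block hk hn.1 (by rw [exBlockStart_succ_of_sq hsq]; omega), if_pos hsq,
      if_pos (by omega)]
  have : (k : ℝ) ≠ 0 := by positivity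
  rw [sum_congr rfl hterm, sum_const, Nat.card_Ico, Nat.add_sub_cancel_left, nsmul_eq_mul]
  field_simp

lemma sum_exA_neg_half {k : ℕ} (hk : 1 ≤ k) (hsq : Nat.sqrt k * Nat.sqrt k = k) :
    ∑ n ∈ Ico (exBlockStart k + k) (exBlockStart (k + 1)), exA n = -1 := by
  rw [exBlockStart_succ_of_sq hsq]
  have hterm : ∀ n ∈ Ico (exBlockStart k + k) (exBlockStart k + k + k), exA n = -(1 / k) := by
    intro n hn
    rw [mem_Ico] at hn
    rw [exA_of_mem_block hk (by omega) (by rw [exBlockStart_succ_of_sq hsq]; omega),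
      if_pos hsq, if_neg (by omega)]
  have : (k : ℝ) ≠ 0 := by positivity
  rw [sum_congr rfl hterm, sum_const, Nat.card_Ico, Nat.add_sub_cancel_left, nsmul_eq_mul]
  field_simp

lemma sum_exA_block_of_not_sq {k : ℕ} (hk : 1 ≤ k) (hsq : ¬ Nat.sqrt k * Nat.sqrt k = k) :
    ∑ n ∈ Ico (exBlockStart k) (exBlockStart (k + 1)), exA n = 0 := by
  have hst : exBlockStart (k + 1) = exBlockStart k + 1 + 1 := by
    rw [exBlockStart_succ, exBlockLen, if_neg hsq]
  rw [hst, sum_Ico_succ_top (by omega), sum_Ico_succ_top le_rfl, Ico_self, sum_empty,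
    exA_of_mem_block hk le_rfl (by omega), exA_of_mem_block hk (by omega) (by omega),
    if_neg hsq, if_neg hsq, if_pos (by omega), if_neg (by omega)]
  ring

lemma sum_exA_block (k : ℕ) :
    ∑ n ∈ Ico (exBlockStart k) (exBlockStart (k + 1)), exA n = 0 := by
  rcases Nat.eq_zero_or_pos k with rfl | hk
  · simp [exBlockStart]
  by_cases hsq : Nat.sqrt k * Nat.sqrt k = k
  · have hmid : exBlockStart k + k ≤ exBlockStart (k + 1) := by
      rw [exBlockStart_succ_of_sq hsq]; omega
    rw [← sum_Ico_consecutive _ (Nat.le_add_right _ k) hmid, sum_exA_pos_half hk hsq,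
      sum_exA_neg_half hk hsq]
    ring
  · exact sum_exA_block_of_not_sq hk hsq

lemma partialSum_exA_exBlockStart (k : ℕ) : partialSum exA (exBlockStart k) = 0 := by
  induction k with
  | zero => simp [partialSum, exBlockStart]
  | succ k ih =>
    rw [← partialSum_add_sum_Ico exA (exBlockStart_mono k.le_succ), ih, sum_exA_block]
    ring

lemma partialSum_exA_sq (m : ℕ) (hm : 1 ≤ m) :
    partialSum exA (exBlockStart (m * m) + m * m) = 1 := by
  have hk : 1 ≤ m * m := Nat.one_le_iff_ne_zero.mpr (by positivity)
  have hsq : Nat.sqrt (m * m) * Nat.sqrt (m * m) = m * m := by rw [Nat.sqrt_eq]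
  rw [← partialSum_add_sum_Ico exA (Nat.le_add_right _ _), partialSum_exA_exBlockStart,
    sum_exA_pos_half hk hsq, zero_add]

/-- The example series diverges: its sequence of partial sums does
not converge. -/
theorem statement12 : ¬ Converges exA := by
  refine not_converges_of_frequently_eq zero_ne_one ?_ ?_ <;> rw [frequently_atTop] <;> intro N
  · exact ⟨exBlockStart (N + 1), le_exBlockStart_succ N, partialSum_exA_exBlockStart _⟩
  · refine ⟨exBlockStart ((N + 1) * (N + 1)) + (N + 1) * (N + 1), ?_, partialSum_exA_sq _ N.succ_pos⟩
    nlinarith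
end
end

section
/- For the example series ∑_{n=0}^∞ a_n there exists a type R permutation σ of ℕ with bounded block number 2 such that ∑_{n=0}^∞ a_{σ(n)} = 0; in particular the example series is conditionally divergent and admits a type R λ-permutation fixing it to 0. -/
open Filter Finset

noncomputable section
open scoped Classical

namespace Ex13

lemma two_le_len {k : ℕ} (hk : 1 ≤ k) : 2 ≤ exBlockLen k := by
  unfold exBlockLen; split <;> omega

lemma start_succ (k : ℕ) : exBlockStart (k + 1) = exBlockStart k + exBlockLen k := by
  rcases Nat.eq_zero_or_pos k with h | h
  · subst h; simp [exBlockStart, exBlockLen]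
  · unfold exBlockStart
    rw [Finset.sum_Ico_succ_top h]

lemma start_mono : Monotone exBlockStart := by
  intro a b hab
  exact Finset.sum_le_sum_of_subset (Finset.Ico_subset_Ico le_rfl hab)

lemma start_one : exBlockStart 1 = 0 := by simp [exBlockStart]

lemma le_start (k : ℕ) : k ≤ exBlockStart k + 1 := by
  induction k with
  | zero => omega
  | succ n ih =>
    rcases Nat.eq_zero_or_pos n with h | h
    · subst h; omega
    · have h1 := two_le_len h
      have h2 := start_succ n
      omega

lemma idx_eq {k n : ℕ} (hk : 1 ≤ k) (h1 : exBlockStart k ≤ n)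
    (h2 : n < exBlockStart (k + 1)) : exBlockIdx n = k := by
  have hb : k ≤ n + 1 := le_trans (le_start k) (by omega)
  have hge : k ≤ exBlockIdx n := Nat.le_findGreatest hb h1
  have hle : exBlockIdx n ≤ k := by
    by_contra h
    push_neg at h
    have hp : exBlockStart (exBlockIdx n) ≤ n :=
      Nat.findGreatest_spec (P := fun j => exBlockStart j ≤ n) hb h1
    have : exBlockStart (k + 1) ≤ exBlockStart (exBlockIdx n) := start_mono h
    omega
  omega

lemma idx_spec (n : ℕ) :
    1 ≤ exBlockIdx n ∧ exBlockStart (exBlockIdx n) ≤ n ∧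
      n < exBlockStart (exBlockIdx n) + exBlockLen (exBlockIdx n) := by
  have h1 : (1 : ℕ) ≤ n + 1 := by omega
  have hp1 : exBlockStart 1 ≤ n := by simp [start_one]
  have hge : 1 ≤ exBlockIdx n := Nat.le_findGreatest h1 hp1
  have hspec : exBlockStart (exBlockIdx n) ≤ n := Nat.findGreatest_spec (P := fun j => exBlockStart j ≤ n) h1 hp1
  refine ⟨hge, hspec, ?_⟩
  rw [← start_succ]
  by_contra h
  push_neg at h
  have hb : exBlockIdx n + 1 ≤ n + 1 := by
    have := le_start (exBlockIdx n + 1)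
    omega
  exact Nat.findGreatest_is_greatest (P := fun j => exBlockStart j ≤ n) (Nat.lt_succ_of_le (le_of_eq rfl)) hb h

lemma idx_eq' {k o : ℕ} (hk : 1 ≤ k) (ho : o < exBlockLen k) :
    exBlockIdx (exBlockStart k + o) = k :=
  idx_eq hk (by omega) (by rw [start_succ]; omega)

lemma block_decomp (n : ℕ) :
    ∃ k o, 1 ≤ k ∧ o < exBlockLen k ∧ n = exBlockStart k + o := by
  obtain ⟨hk, h1, h2⟩ := idx_spec n
  exact ⟨exBlockIdx n, n - exBlockStart (exBlockIdx n), hk, by omega, by omega⟩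

lemma exA_eq {k o : ℕ} (hk : 1 ≤ k) (ho : o < exBlockLen k) :
    exA (exBlockStart k + o) =
      if Nat.sqrt k * Nat.sqrt k = k then
        (if o < k then (1 : ℝ) / (k : ℝ) else -((1 : ℝ) / (k : ℝ)))
      else (if o = 0 then (1 : ℝ) / (k : ℝ) else -((1 : ℝ) / (k : ℝ))) := by
  simp only [exA]
  rw [idx_eq' hk ho, Nat.add_sub_cancel_left]

lemma len_sq {k : ℕ} (h : Nat.sqrt k * Nat.sqrt k = k) : exBlockLen k = 2 * k := by
  simp [exBlockLen, h]

lemma len_ns {k : ℕ} (h : ¬ Nat.sqrt k * Nat.sqrt k = k) : exBlockLen k = 2 := by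
  simp [exBlockLen, h]

/-- The rearranging map: interleaves the positive and negative halves of each square block. -/
def sigmaFun (n : ℕ) : ℕ :=
  let k := exBlockIdx n
  let s := exBlockStart k
  let o := n - s
  if Nat.sqrt k * Nat.sqrt k = k then
    (if o % 2 = 0 then s + o / 2 else s + k + o / 2)
  else n

/-- The inverse of `sigmaFun`. -/
def tauFun (n : ℕ) : ℕ :=
  let k := exBlockIdx n
  let s := exBlockStart k
  let o := n - s
  if Nat.sqrt k * Nat.sqrt k = k then
    (if o < k then s + 2 * o else s + (2 * (o - k) + 1))
  else n

lemma sigma_apply {k o : ℕ} (hk : 1 ≤ k) (ho : o < exBlockLen k) :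
    sigmaFun (exBlockStart k + o) =
      if Nat.sqrt k * Nat.sqrt k = k then
        (if o % 2 = 0 then exBlockStart k + o / 2 else exBlockStart k + k + o / 2)
      else exBlockStart k + o := by
  simp only [sigmaFun]
  rw [idx_eq' hk ho, Nat.add_sub_cancel_left]

lemma tau_apply {k o : ℕ} (hk : 1 ≤ k) (ho : o < exBlockLen k) :
    tauFun (exBlockStart k + o) =
      if Nat.sqrt k * Nat.sqrt k = k then
        (if o < k then exBlockStart k + 2 * o else exBlockStart k + (2 * (o - k) + 1))
      else exBlockStart k + o := by
  simp only [tauFun]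
  rw [idx_eq' hk ho, Nat.add_sub_cancel_left]

lemma tau_sigma' {k o : ℕ} (hk : 1 ≤ k) (ho : o < exBlockLen k) :
    tauFun (sigmaFun (exBlockStart k + o)) = exBlockStart k + o := by
  rw [sigma_apply hk ho]
  by_cases hsq : Nat.sqrt k * Nat.sqrt k = k
  · rw [if_pos hsq]
    have hlen := len_sq hsq
    by_cases he : o % 2 = 0
    · rw [if_pos he]
      have h2 : o / 2 < exBlockLen k := by omega
      rw [tau_apply hk h2, if_pos hsq, if_pos (show o / 2 < k by omega)]
      omega
    · rw [if_neg he]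
      have h2 : k + o / 2 < exBlockLen k := by omega
      rw [show exBlockStart k + k + o / 2 = exBlockStart k + (k + o / 2) by omega,
        tau_apply hk h2, if_pos hsq, if_neg (show ¬ k + o / 2 < k by omega)]
      omega
  · rw [if_neg hsq, tau_apply hk ho, if_neg hsq]

lemma sigma_tau' {k o : ℕ} (hk : 1 ≤ k) (ho : o < exBlockLen k) :
    sigmaFun (tauFun (exBlockStart k + o)) = exBlockStart k + o := by
  rw [tau_apply hk ho]
  by_cases hsq : Nat.sqrt k * Nat.sqrt k = k
  · rw [if_pos hsq]
    have hlen := len_sq hsq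
    by_cases hp : o < k
    · rw [if_pos hp]
      have h2 : 2 * o < exBlockLen k := by omega
      rw [sigma_apply hk h2, if_pos hsq, if_pos (show 2 * o % 2 = 0 by omega)]
      omega
    · rw [if_neg hp]
      have h2 : 2 * (o - k) + 1 < exBlockLen k := by omega
      rw [sigma_apply hk h2, if_pos hsq, if_neg (show ¬ (2 * (o - k) + 1) % 2 = 0 by omega)]
      omega
  · rw [if_neg hsq, sigma_apply hk ho, if_neg hsq]

/-- The rearranging permutation. -/
def exSigma : Equiv.Perm ℕ :=
  ⟨sigmaFun, tauFun,
    fun n => by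
      obtain ⟨k, o, hk, ho, rfl⟩ := block_decomp n
      exact tau_sigma' hk ho,
    fun n => by
      obtain ⟨k, o, hk, ho, rfl⟩ := block_decomp n
      exact sigma_tau' hk ho⟩

lemma exSigma_apply (n : ℕ) : exSigma n = sigmaFun n := rfl

lemma sigma_range {k o : ℕ} (hk : 1 ≤ k) (ho : o < exBlockLen k) :
    ∃ p, p < exBlockLen k ∧ sigmaFun (exBlockStart k + o) = exBlockStart k + p := by
  rw [sigma_apply hk ho]
  by_cases hsq : Nat.sqrt k * Nat.sqrt k = k
  · have hlen := len_sq hsq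
    rw [if_pos hsq]
    by_cases he : o % 2 = 0
    · exact ⟨o / 2, by omega, by rw [if_pos he]⟩
    · exact ⟨k + o / 2, by omega, by rw [if_neg he]; omega⟩
  · exact ⟨o, ho, by rw [if_neg hsq]⟩

lemma one_div_k_pos {k : ℕ} (hk : 1 ≤ k) : (0:ℝ) < 1 / (k:ℝ) :=
  one_div_pos.mpr (by exact_mod_cast hk)

lemma typeR : IsTypeR exA exSigma := by
  intro i j hlt hsign
  obtain ⟨ki, oi, hki, hoi, rfl⟩ := block_decomp i
  obtain ⟨kj, oj, hkj, hoj, rfl⟩ := block_decomp j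
  simp only [exSigma_apply] at hlt hsign
  rcases lt_trichotomy ki kj with h | h | h
  · have h1 : exBlockStart (ki + 1) ≤ exBlockStart kj := start_mono h
    rw [start_succ] at h1
    omega
  · subst h
    rw [sigma_apply hki hoi, sigma_apply hki hoj] at hlt hsign
    by_cases hsq : Nat.sqrt ki * Nat.sqrt ki = ki
    · have hlen := len_sq hsq
      rw [if_pos hsq, if_pos hsq] at hlt hsign
      by_cases hei : oi % 2 = 0 <;> by_cases hej : oj % 2 = 0
      · rw [if_pos hei, if_pos hej] at hlt; omega
      · exfalso
        rw [if_pos hei, if_neg hej] at hsign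
        rw [show exBlockStart ki + ki + oj / 2 = exBlockStart ki + (ki + oj / 2) from by omega]
          at hsign
        rw [exA_eq hki (show oi / 2 < exBlockLen ki by omega),
            exA_eq hki (show ki + oj / 2 < exBlockLen ki by omega),
            if_pos hsq, if_pos hsq, if_pos (show oi / 2 < ki by omega),
            if_neg (show ¬ ki + oj / 2 < ki by omega)] at hsign
        have := one_div_k_pos (k := ki) hki
        rcases hsign with ⟨h1, h2⟩ | ⟨h1, h2⟩ <;> linarith
      · exfalso
        rw [if_neg hei, if_pos hej] at hlt
        omega
      · rw [if_neg hei, if_neg hej] at hlt; omega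
    · rw [if_neg hsq, if_neg hsq] at hlt; omega
  · exfalso
    obtain ⟨pi, hpi, hei⟩ := sigma_range hki hoi
    obtain ⟨pj, hpj, hej⟩ := sigma_range hkj hoj
    rw [hei, hej] at hlt
    have h1 : exBlockStart (kj + 1) ≤ exBlockStart ki := start_mono h
    rw [start_succ] at h1
    omega

lemma sigma_tau (n : ℕ) : sigmaFun (tauFun n) = n := by
  obtain ⟨k, o, hk, ho, rfl⟩ := block_decomp n
  exact sigma_tau' hk ho

lemma tau_range {k o : ℕ} (hk : 1 ≤ k) (ho : o < exBlockLen k) :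
    ∃ p, p < exBlockLen k ∧ tauFun (exBlockStart k + o) = exBlockStart k + p := by
  rw [tau_apply hk ho]
  by_cases hsq : Nat.sqrt k * Nat.sqrt k = k
  · have hlen := len_sq hsq
    rw [if_pos hsq]
    by_cases hp : o < k
    · exact ⟨2 * o, by omega, by rw [if_pos hp]⟩
    · exact ⟨2 * (o - k) + 1, by omega, by rw [if_neg hp]⟩
  · exact ⟨o, ho, by rw [if_neg hsq]⟩

lemma sigma_lt_start {k n : ℕ} (h : n < exBlockStart k) : sigmaFun n < exBlockStart k := by
  obtain ⟨kn, onn, hkn, hon2, rfl⟩ := block_decomp n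
  obtain ⟨p, hp, he⟩ := sigma_range hkn hon2
  rw [he]
  have hlt : kn < k := by
    by_contra hc
    push_neg at hc
    have := start_mono hc
    omega
  have h2 := start_mono (Nat.succ_le_of_lt hlt)
  rw [start_succ] at h2
  omega

lemma tau_lt_start {k n : ℕ} (h : n < exBlockStart k) : tauFun n < exBlockStart k := by
  obtain ⟨kn, onn, hkn, hon2, rfl⟩ := block_decomp n
  obtain ⟨p, hp, he⟩ := tau_range hkn hon2
  rw [he]
  have hlt : kn < k := by
    by_contra hc
    push_neg at hc
    have := start_mono hc
    omega
  have h2 := start_mono (Nat.succ_le_of_lt hlt)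
  rw [start_succ] at h2
  omega

lemma blockCount_le_two (A B C : ℕ) (hAB : A ≤ B) :
    blockCount (Finset.range A ∪ Finset.Icc B C) ≤ 2 := by
  unfold blockCount
  have hsub : ((Finset.range A ∪ Finset.Icc B C).filter
      (fun x => x + 1 ∉ Finset.range A ∪ Finset.Icc B C)) ⊆ {A - 1, C} := by
    intro x hx
    simp only [Finset.mem_filter, Finset.mem_union, Finset.mem_range, Finset.mem_Icc,
      not_or, not_and, not_lt, not_le, Finset.mem_insert, Finset.mem_singleton] at hx ⊢
    omega
  refine le_trans (Finset.card_le_card hsub) ?_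
  refine le_trans (Finset.card_insert_le _ _) ?_
  simp

lemma image_sq {k o : ℕ} (hk : 1 ≤ k) (hsq : Nat.sqrt k * Nat.sqrt k = k)
    (ho : o < exBlockLen k) :
    (Finset.range (exBlockStart k + o + 1)).image exSigma =
      Finset.range (exBlockStart k + o / 2 + 1) ∪
        Finset.Icc (exBlockStart k + k) (exBlockStart k + k + (o + 1) / 2 - 1) := by
  have hlen := len_sq hsq
  ext m
  simp only [Finset.mem_image, Finset.mem_range, Finset.mem_union, Finset.mem_Icc,
    exSigma_apply]
  constructor
  · rintro ⟨i, hi, rfl⟩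
    by_cases his : i < exBlockStart k
    · left; exact lt_of_lt_of_le (sigma_lt_start his) (by omega)
    · push_neg at his
      obtain ⟨oi, hoi, rfl⟩ : ∃ oi, oi ≤ o ∧ i = exBlockStart k + oi :=
        ⟨i - exBlockStart k, by omega, by omega⟩
      rw [sigma_apply hk (by omega), if_pos hsq]
      by_cases he : oi % 2 = 0
      · rw [if_pos he]; left; omega
      · rw [if_neg he]; right; omega
  · rintro (hm | ⟨hm1, hm2⟩)
    · by_cases hms : m < exBlockStart k
      · refine ⟨tauFun m, ?_, sigma_tau m⟩
        have := tau_lt_start hms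
        omega
      · push_neg at hms
        refine ⟨exBlockStart k + 2 * (m - exBlockStart k), by omega, ?_⟩
        rw [sigma_apply hk (by omega), if_pos hsq, if_pos (by omega)]
        omega
    · refine ⟨exBlockStart k + (2 * (m - exBlockStart k - k) + 1), by omega, ?_⟩
      rw [sigma_apply hk (by omega), if_pos hsq, if_neg (by omega)]
      omega

lemma image_ns {k o : ℕ} (hk : 1 ≤ k) (hsq : ¬ Nat.sqrt k * Nat.sqrt k = k)
    (ho : o < exBlockLen k) :
    (Finset.range (exBlockStart k + o + 1)).image exSigma =
      Finset.range (exBlockStart k + o + 1) := by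
  ext m
  simp only [Finset.mem_image, Finset.mem_range, exSigma_apply]
  constructor
  · rintro ⟨i, hi, rfl⟩
    by_cases his : i < exBlockStart k
    · exact lt_of_lt_of_le (sigma_lt_start his) (by omega)
    · push_neg at his
      obtain ⟨oi, hoi, rfl⟩ : ∃ oi, oi ≤ o ∧ i = exBlockStart k + oi :=
        ⟨i - exBlockStart k, by omega, by omega⟩
      rw [sigma_apply hk (by omega), if_neg hsq]
      omega
  · intro hm
    by_cases hms : m < exBlockStart k
    · refine ⟨tauFun m, ?_, sigma_tau m⟩
      have := tau_lt_start hms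
      omega
    · push_neg at hms
      refine ⟨m, hm, ?_⟩
      obtain ⟨om, hom, rfl⟩ : ∃ om, om ≤ o ∧ m = exBlockStart k + om :=
        ⟨m - exBlockStart k, by omega, by omega⟩
      rw [sigma_apply hk (by omega), if_neg hsq]

lemma bbn : HasBBN exSigma 2 := by
  intro n
  obtain ⟨k, o, hk, ho, rfl⟩ := block_decomp n
  by_cases hsq : Nat.sqrt k * Nat.sqrt k = k
  · rw [image_sq hk hsq ho]
    have hlen := len_sq hsq
    exact blockCount_le_two _ _ _ (by omega)
  · rw [image_ns hk hsq ho]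
    have h0 : Finset.range (exBlockStart k + o + 1) =
        Finset.range (exBlockStart k + o + 1) ∪ Finset.Icc (exBlockStart k + o + 1) 0 := by
      rw [Finset.Icc_eq_empty (by omega), Finset.union_empty]
    rw [h0]
    exact blockCount_le_two _ _ _ le_rfl

/-- Value of the partial sums of the rearranged series. -/
def Tval (n : ℕ) : ℝ :=
  let k := exBlockIdx n
  let o := n - exBlockStart k
  if Nat.sqrt k * Nat.sqrt k = k then (if o % 2 = 1 then 1 / (k : ℝ) else 0)
  else (if o = 1 then 1 / (k : ℝ) else 0)

lemma Tval_eq {k o : ℕ} (hk : 1 ≤ k) (ho : o < exBlockLen k) :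
    Tval (exBlockStart k + o) =
      if Nat.sqrt k * Nat.sqrt k = k then (if o % 2 = 1 then 1 / (k : ℝ) else 0)
      else (if o = 1 then 1 / (k : ℝ) else 0) := by
  simp only [Tval]
  rw [idx_eq' hk ho, Nat.add_sub_cancel_left]

lemma b_eq {k o : ℕ} (hk : 1 ≤ k) (ho : o < exBlockLen k) :
    exA (exSigma (exBlockStart k + o)) =
      if Nat.sqrt k * Nat.sqrt k = k then
        (if o % 2 = 0 then 1 / (k : ℝ) else -(1 / (k : ℝ)))
      else (if o = 0 then 1 / (k : ℝ) else -(1 / (k : ℝ))) := by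
  rw [exSigma_apply, sigma_apply hk ho]
  by_cases hsq : Nat.sqrt k * Nat.sqrt k = k
  · have hlen := len_sq hsq
    rw [if_pos hsq, if_pos hsq]
    by_cases he : o % 2 = 0
    · rw [if_pos he, if_pos he, exA_eq hk (show o / 2 < exBlockLen k by omega), if_pos hsq,
        if_pos (show o / 2 < k by omega)]
    · rw [if_neg he, if_neg he,
        show exBlockStart k + k + o / 2 = exBlockStart k + (k + o / 2) from by omega,
        exA_eq hk (show k + o / 2 < exBlockLen k by omega), if_pos hsq,
        if_neg (show ¬ k + o / 2 < k by omega)]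
  · rw [if_neg hsq, if_neg hsq, exA_eq hk ho, if_neg hsq]

lemma T_eq (n : ℕ) : partialSum (fun m => exA (exSigma m)) n = Tval n := by
  induction n with
  | zero =>
    have h00 : Tval (exBlockStart 1 + 0) = 0 := by
      rw [Tval_eq le_rfl (by have := two_le_len le_rfl; omega)]
      split_ifs <;> simp_all
    rw [start_one] at h00
    simp only [partialSum, Finset.range_zero, Finset.sum_empty]
    rw [← h00]
  | succ n ih =>
    simp only [partialSum, Finset.sum_range_succ] at ih ⊢
    rw [ih]
    obtain ⟨k, o, hk, ho, rfl⟩ := block_decomp n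
    rw [Tval_eq hk ho, b_eq hk ho]
    by_cases ho1 : o + 1 < exBlockLen k
    · rw [show exBlockStart k + o + 1 = exBlockStart k + (o + 1) from by omega, Tval_eq hk ho1]
      by_cases hsq : Nat.sqrt k * Nat.sqrt k = k
      · rw [if_pos hsq, if_pos hsq, if_pos hsq]
        by_cases he : o % 2 = 0
        · rw [if_neg (show ¬ o % 2 = 1 by omega), if_pos he,
            if_pos (show (o + 1) % 2 = 1 by omega)]
          ring
        · rw [if_pos (show o % 2 = 1 by omega), if_neg he,
            if_neg (show ¬ (o + 1) % 2 = 1 by omega)]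
          ring
      · have hlen := len_ns hsq
        rw [if_neg hsq, if_neg hsq, if_neg hsq]
        have ho0 : o = 0 := by omega
        subst ho0
        rw [if_neg (by norm_num), if_pos rfl, if_pos rfl]
        ring
    · have hend : o + 1 = exBlockLen k := by omega
      have h1 : exBlockStart k + o + 1 = exBlockStart (k + 1) + 0 := by
        rw [start_succ]; omega
      have hT : Tval (exBlockStart (k + 1) + 0) = 0 := by
        rw [Tval_eq (by omega) (by have := two_le_len (show 1 ≤ k + 1 by omega); omega)]
        split_ifs <;> simp_all
      rw [h1, hT]
      by_cases hsq : Nat.sqrt k * Nat.sqrt k = k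
      · have hlen := len_sq hsq
        rw [if_pos hsq, if_pos hsq, if_pos (show o % 2 = 1 by omega),
          if_neg (show ¬ o % 2 = 0 by omega)]
        ring
      · have hlen := len_ns hsq
        rw [if_neg hsq, if_neg hsq, if_pos (show o = 1 by omega),
          if_neg (show ¬ o = 0 by omega)]
        ring

lemma idx_tendsto : Filter.Tendsto exBlockIdx Filter.atTop Filter.atTop := by
  rw [Filter.tendsto_atTop_atTop]
  intro K
  refine ⟨exBlockStart K + K, fun n hn => ?_⟩
  exact Nat.le_findGreatest (by omega) (by omega)

lemma conv0 : ConvergesTo (fun n => exA (exSigma n)) 0 := by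
  unfold ConvergesTo
  have h1 : ∀ n, (0 : ℝ) ≤ Tval n := by
    intro n
    simp only [Tval]
    split_ifs <;> positivity
  have h2 : ∀ n, Tval n ≤ 1 / (exBlockIdx n : ℝ) := by
    intro n
    simp only [Tval]
    split_ifs <;> first | exact le_rfl | positivity
  have htop : Filter.Tendsto (fun n => 1 / (exBlockIdx n : ℝ)) Filter.atTop (nhds 0) :=
    tendsto_one_div_atTop_nhds_zero_nat.comp idx_tendsto
  have hT : Filter.Tendsto Tval Filter.atTop (nhds 0) :=
    tendsto_of_tendsto_of_tendsto_of_le_of_le tendsto_const_nhds htop h1 h2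
  exact Filter.Tendsto.congr (fun n => (T_eq n).symm) hT

/-- Value of the partial sums of the original series. -/
def Sval (n : ℕ) : ℝ :=
  let k := exBlockIdx n
  let o := n - exBlockStart k
  if Nat.sqrt k * Nat.sqrt k = k then
    (if o ≤ k then (o : ℝ) / (k : ℝ) else ((2 * k - o : ℕ) : ℝ) / (k : ℝ))
  else (if o = 1 then 1 / (k : ℝ) else 0)

lemma Sval_eq {k o : ℕ} (hk : 1 ≤ k) (ho : o < exBlockLen k) :
    Sval (exBlockStart k + o) =
      if Nat.sqrt k * Nat.sqrt k = k then
        (if o ≤ k then (o : ℝ) / (k : ℝ) else ((2 * k - o : ℕ) : ℝ) / (k : ℝ))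
      else (if o = 1 then 1 / (k : ℝ) else 0) := by
  simp only [Sval]
  rw [idx_eq' hk ho, Nat.add_sub_cancel_left]

lemma S_eq (n : ℕ) : partialSum exA n = Sval n := by
  induction n with
  | zero =>
    have h00 : Sval (exBlockStart 1 + 0) = 0 := by
      rw [Sval_eq le_rfl (by have := two_le_len le_rfl; omega)]
      split_ifs <;> simp_all
    rw [start_one] at h00
    simp only [partialSum, Finset.range_zero, Finset.sum_empty]
    rw [← h00]
  | succ n ih =>
    simp only [partialSum, Finset.sum_range_succ] at ih ⊢
    rw [ih]
    obtain ⟨k, o, hk, ho, rfl⟩ := block_decomp n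
    have hkR : ((k : ℕ) : ℝ) ≠ 0 := Nat.cast_ne_zero.mpr (by omega)
    rw [Sval_eq hk ho, exA_eq hk ho]
    by_cases ho1 : o + 1 < exBlockLen k
    · rw [show exBlockStart k + o + 1 = exBlockStart k + (o + 1) from by omega, Sval_eq hk ho1]
      by_cases hsq : Nat.sqrt k * Nat.sqrt k = k
      · have hlen := len_sq hsq
        rw [if_pos hsq, if_pos hsq, if_pos hsq]
        by_cases hok : o + 1 ≤ k
        · rw [if_pos (show o ≤ k by omega), if_pos (show o < k by omega), if_pos hok]
          push_cast
          field_simp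
        · by_cases hok2 : o ≤ k
          · have hoe : o = k := by omega
            subst hoe
            rw [if_pos hok2, if_neg (show ¬ o < o by omega), if_neg hok]
            rw [show (2 * o - (o + 1) : ℕ) = o - 1 from by omega,
              Nat.cast_sub (show 1 ≤ o from hk)]
            push_cast
            field_simp
            ring
          · rw [if_neg hok2, if_neg (show ¬ o < k by omega), if_neg hok]
            rw [show (2 * k - (o + 1) : ℕ) = (2 * k - o) - 1 from by omega,
              Nat.cast_sub (show 1 ≤ 2 * k - o by omega),
              Nat.cast_sub (show o ≤ 2 * k by omega)]
            push_cast
            field_simp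
            ring
      · have hlen := len_ns hsq
        rw [if_neg hsq, if_neg hsq, if_neg hsq]
        have ho0 : o = 0 := by omega
        subst ho0
        rw [if_neg (by norm_num), if_pos rfl, if_pos rfl]
        norm_num
    · have hend : o + 1 = exBlockLen k := by omega
      have h1 : exBlockStart k + o + 1 = exBlockStart (k + 1) + 0 := by
        rw [start_succ]; omega
      have hS : Sval (exBlockStart (k + 1) + 0) = 0 := by
        rw [Sval_eq (by omega) (by have := two_le_len (show 1 ≤ k + 1 by omega); omega)]
        split_ifs <;> simp_all
      rw [h1, hS]
      by_cases hsq : Nat.sqrt k * Nat.sqrt k = k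
      · have hlen := len_sq hsq
        rw [if_pos hsq, if_pos hsq]
        by_cases hok : o ≤ k
        · have hk1 : k = 1 := by omega
          have ho1' : o = 1 := by omega
          subst hk1; subst ho1'
          norm_num
        · rw [if_neg hok, if_neg (show ¬ o < k by omega)]
          rw [show (2 * k - o : ℕ) = 1 from by omega]
          push_cast
          ring
      · have hlen := len_ns hsq
        rw [if_neg hsq, if_neg hsq, if_pos (show o = 1 by omega),
          if_neg (show ¬ o = 0 by omega)]
        ring

lemma S_at_start {k : ℕ} (hk : 1 ≤ k) : partialSum exA (exBlockStart k) = 0 := by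
  rw [S_eq, show exBlockStart k = exBlockStart k + 0 from (Nat.add_zero _).symm,
    Sval_eq hk (by have := two_le_len hk; omega)]
  split_ifs <;> simp_all

lemma S_at_mid {m : ℕ} (hm : 1 ≤ m) :
    partialSum exA (exBlockStart (m * m) + m * m) = 1 := by
  have hk : 1 ≤ m * m := Nat.mul_pos hm hm
  have hsq : Nat.sqrt (m * m) * Nat.sqrt (m * m) = m * m := by rw [Nat.sqrt_eq]
  have hlen := len_sq hsq
  rw [S_eq, Sval_eq hk (by omega), if_pos hsq, if_pos le_rfl]
  exact div_self (Nat.cast_ne_zero.mpr (by omega))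

lemma not_conv : ¬ Converges exA := by
  rintro ⟨L, hL⟩
  have t1 : Filter.Tendsto (fun m : ℕ => exBlockStart (m + 1)) Filter.atTop Filter.atTop := by
    rw [Filter.tendsto_atTop_atTop]
    intro K
    exact ⟨K, fun m hm => by have := le_start (m + 1); omega⟩
  have h0 : Filter.Tendsto (fun m : ℕ => partialSum exA (exBlockStart (m + 1)))
      Filter.atTop (nhds L) := hL.comp t1
  have h0' : Filter.Tendsto (fun _ : ℕ => (0 : ℝ)) Filter.atTop (nhds L) :=
    Filter.Tendsto.congr (fun m => S_at_start (show 1 ≤ m + 1 by omega)) h0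
  have hL0 : L = 0 := (tendsto_nhds_unique h0' tendsto_const_nhds)
  have t2 : Filter.Tendsto (fun m : ℕ => exBlockStart ((m + 1) * (m + 1)) + (m + 1) * (m + 1))
      Filter.atTop Filter.atTop := by
    rw [Filter.tendsto_atTop_atTop]
    intro K
    refine ⟨K, fun m hm => ?_⟩
    have h2 : m + 1 ≤ (m + 1) * (m + 1) := Nat.le_mul_of_pos_left _ (by omega)
    omega
  have h1 : Filter.Tendsto
      (fun m : ℕ => partialSum exA (exBlockStart ((m + 1) * (m + 1)) + (m + 1) * (m + 1)))
      Filter.atTop (nhds L) := hL.comp t2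
  have h1' : Filter.Tendsto (fun _ : ℕ => (1 : ℝ)) Filter.atTop (nhds L) :=
    Filter.Tendsto.congr (fun m => S_at_mid (show 1 ≤ m + 1 by omega)) h1
  have hL1 : L = 1 := (tendsto_nhds_unique h1' tendsto_const_nhds)
  rw [hL0] at hL1
  norm_num at hL1

end Ex13

/-- There is a type R permutation of the example series with
bounded block number `2` rearranging it to `0`; in particular the example
series is conditionally divergent and admits a type R λ-permutation fixing it
to `0`. -/
theorem statement13 :
    (∃ σ : Equiv.Perm ℕ, IsTypeR exA σ ∧ HasBBN σ 2 ∧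
      ConvergesTo (fun n => exA (σ n)) 0) ∧
    CondDivergent exA := by
  exact ⟨⟨Ex13.exSigma, Ex13.typeR, Ex13.bbn, Ex13.conv0⟩,
    Ex13.not_conv, Ex13.exSigma, 0, Ex13.conv0⟩
end
end
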